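/- arXiv:2502.17746 — 7 statements merged into one kernel-verified Lean document; each statement's English description precedes it below -/
import Mathlib

section
/- Let $(\Omega,\mathcal{F},\mathbb{P})$ be a probability space and $(X_n)_{n\in\mathbb{N}}$ a sequence of uniformly bounded, non-negative random variables. Suppose there exist $a\in(0,1)$ and $c>0$ such that $\mathbb{E}(X_n)=cn^{-a}$ for all $n$, and there exists $\varepsilon>0$ and $C>0$ such that $\sum_{n=1}^N\sum_{m=n+1}^N \operatorname{Cov}(X_n,X_m)\le C N^{2-2a-\varepsilon}$ for all $N$. Then for almost every $\omega\in\Omega$, $\lim_{N\to\infty}\frac{1}{W_N}\sum_{n=1}^N X_n(\omega)=1$, where $W_N:=\sum_{n=1}^N\mathbb{E}(X_n)$. -/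
/-!
Write `S_N = ∑_{n ≤ N} X_n`, so that `W_N = 𝔼 S_N ≥ c N^{1-a}`. Expanding the variance and bounding
`Var X_n ≤ M 𝔼 X_n` (Bhatia–Davis, as `0 ≤ X_n ≤ M`) gives
`Var S_N / W_N² ≤ (M/c) N^{-(1-a)} + (2C/c²) N^{-ε}`.
Along `N_k = (k+1)^m` with `m (1-a) > 1` and `m ε > 1` these bounds are summable, so
`∑_k (S_{N_k}/W_{N_k} - 1)²` has finite expectation and `S_{N_k}/W_{N_k} → 1` almost surely.
Since `W_N / N` is decreasing, `1 ≤ W_{N_{k+1}} / W_{N_k} ≤ N_{k+1}/N_k → 1`, and the monotonicity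
of `S` and `W` fills in the gaps between consecutive `N_k`.
-/

open MeasureTheory ProbabilityTheory Filter Topology Finset

lemma Finset.sum_sum_eq_sum_add_two_mul_sum_lt {ι R : Type*} [LinearOrder ι] [CommSemiring R]
    (s : Finset ι) (f : ι → ι → R) (hf : ∀ i j, f i j = f j i) :
    ∑ i ∈ s, ∑ j ∈ s, f i j = ∑ i ∈ s, f i i + 2 * ∑ i ∈ s, ∑ j ∈ s with i < j, f i j := by
  have htri : ∀ i j, f i j = (if j < i then f i j else 0) + (if i = j then f i j else 0)
      + (if i < j then f i j else 0) := by
    intro i j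
    rcases lt_trichotomy i j with h | rfl | h
    · simp [h, h.not_gt, h.ne]
    · simp
    · simp [h, h.not_gt, h.ne']
  have hlt : ∑ i ∈ s, ∑ j ∈ s, (if j < i then f i j else 0)
      = ∑ i ∈ s, ∑ j ∈ s, (if i < j then f i j else 0) := by
    rw [sum_comm]
    simp only [hf]
  conv_lhs => enter [2, i, 2, j]; rw [htri i j]
  simp only [sum_add_distrib, hlt, sum_ite_eq, sum_ite_mem, inter_self, sum_filter]
  ring

lemma monotone_sum_Icc_of_nonneg {w : ℕ → ℝ} (hw : ∀ n, 0 ≤ w n) :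
    Monotone fun N ↦ ∑ n ∈ Icc 1 N, w n := fun _ _ h ↦
  sum_le_sum_of_subset_of_nonneg (Icc_subset_Icc_right h) fun n _ _ ↦ hw n

lemma natCast_mul_le_sum_Icc_of_antitoneOn {w : ℕ → ℝ} (hw : AntitoneOn w (Set.Ici 1)) (N : ℕ) :
    N * w N ≤ ∑ n ∈ Icc 1 N, w n := by
  have h := card_nsmul_le_sum (Icc 1 N) w (w N) fun n hn ↦ by
    rw [mem_Icc] at hn
    exact hw (Set.mem_Ici.mpr hn.1) (Set.mem_Ici.mpr (hn.1.trans hn.2)) hn.2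
  simpa using h

lemma natCast_mul_sum_Icc_le_of_antitoneOn {w : ℕ → ℝ} (hw : AntitoneOn w (Set.Ici 1))
    {N N' : ℕ} (hN : 1 ≤ N) (hNN' : N ≤ N') :
    N * ∑ n ∈ Icc 1 N', w n ≤ N' * ∑ n ∈ Icc 1 N, w n := by
  induction N', hNN' using Nat.le_induction with
  | base => rfl
  | succ N' hNN' ih =>
    have hlast : w (N' + 1) ≤ w N := hw (Set.mem_Ici.mpr hN) (Set.mem_Ici.mpr (by omega)) (by omega)
    have hfirst := natCast_mul_le_sum_Icc_of_antitoneOn hw N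
    rw [sum_Icc_succ_top (by omega)]
    push_cast
    nlinarith

lemma antitoneOn_mul_rpow_neg {a c : ℝ} (ha : 0 ≤ a) (hc : 0 ≤ c) :
    AntitoneOn (fun n : ℕ ↦ c * (n : ℝ) ^ (-a)) (Set.Ici 1) := fun n hn m _ hnm ↦
  mul_le_mul_of_nonneg_left (Real.rpow_le_rpow_of_nonpos (Nat.cast_pos.mpr hn)
    (Nat.cast_le.mpr hnm) (by linarith)) hc

lemma mul_rpow_one_sub_le_sum_Icc {a c : ℝ} (ha : 0 ≤ a) (hc : 0 ≤ c) {N : ℕ} (hN : 1 ≤ N) :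
    c * (N : ℝ) ^ (1 - a) ≤ ∑ n ∈ Icc 1 N, c * (n : ℝ) ^ (-a) := by
  have hN0 : (0 : ℝ) < N := by exact_mod_cast hN
  convert natCast_mul_le_sum_Icc_of_antitoneOn (antitoneOn_mul_rpow_neg ha hc) N using 1
  rw [sub_eq_add_neg, Real.rpow_add hN0, Real.rpow_one]
  ring

lemma tendsto_sum_Icc_div_sum_Icc {w : ℕ → ℝ} (hw : AntitoneOn w (Set.Ici 1))
    (hw0 : ∀ n, 0 ≤ w n) {φ : ℕ → ℕ} (hφ : Monotone φ) (hφ1 : ∀ k, 1 ≤ φ k)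
    (hWφ : ∀ k, 0 < ∑ n ∈ Icc 1 (φ k), w n)
    (hratio : Tendsto (fun k ↦ (φ (k + 1) : ℝ) / φ k) atTop (𝓝 1)) :
    Tendsto (fun k ↦ (∑ n ∈ Icc 1 (φ (k + 1)), w n) / ∑ n ∈ Icc 1 (φ k), w n) atTop (𝓝 1) := by
  refine tendsto_of_tendsto_of_tendsto_of_le_of_le tendsto_const_nhds hratio (fun k ↦ ?_) fun k ↦ ?_
  · rw [one_le_div (hWφ k)]
    exact monotone_sum_Icc_of_nonneg hw0 (hφ k.le_succ)
  · have hφpos : (0 : ℝ) < φ k := by exact_mod_cast hφ1 k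
    rw [div_le_div_iff₀ (hWφ k) hφpos, mul_comm]
    exact natCast_mul_sum_Icc_le_of_antitoneOn hw (hφ1 k) (hφ k.le_succ)

lemma tendsto_succ_pow_div_pow (m : ℕ) :
    Tendsto (fun k : ℕ ↦ (((k + 1 + 1) ^ m : ℕ) : ℝ) / ((k + 1) ^ m : ℕ)) atTop (𝓝 1) := by
  have h : Tendsto (fun k : ℕ ↦ 1 + 1 / ((k : ℝ) + 1)) atTop (𝓝 1) := by
    simpa using (tendsto_one_div_add_atTop_nhds_zero_nat (𝕜 := ℝ)).const_add 1
  have hm := h.pow m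
  rw [one_pow] at hm
  refine hm.congr fun k ↦ ?_
  push_cast
  rw [← div_pow]
  congr 1
  field_simp

lemma summable_natCast_succ_pow_rpow_neg {m : ℕ} {δ : ℝ} (h : 1 < m * δ) :
    Summable fun k : ℕ ↦ (((k + 1) ^ m : ℕ) : ℝ) ^ (-δ) := by
  have h' := (summable_nat_add_iff 1).mpr
    (Real.summable_nat_rpow.mpr (by linarith : -(m * δ) < -1))
  refine h'.congr fun k ↦ ?_
  push_cast
  rw [← Real.rpow_natCast, ← Real.rpow_mul (by positivity)]
  ring_nf

lemma div_sq_le_rpow_neg_add_rpow_neg {V W M C c x a ε : ℝ} (hx : 0 < x) (hc : 0 < c)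
    (hM : 0 ≤ M) (hC : 0 ≤ C) (hW : c * x ^ (1 - a) ≤ W)
    (hV : V ≤ M * W + 2 * C * x ^ (2 - 2 * a - ε)) :
    V / W ^ 2 ≤ M / c * x ^ (-(1 - a)) + 2 * C / c ^ 2 * x ^ (-ε) := by
  have hcx : 0 < c * x ^ (1 - a) := by positivity
  have hW0 : 0 < W := hcx.trans_le hW
  have hfirst : M * W / W ^ 2 ≤ M / c * x ^ (-(1 - a)) := by
    rw [sq, mul_div_mul_right _ _ hW0.ne', Real.rpow_neg hx.le, ← div_eq_mul_inv, div_div]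
    gcongr
  have hsecond : 2 * C * x ^ (2 - 2 * a - ε) / W ^ 2 ≤ 2 * C / c ^ 2 * x ^ (-ε) := by
    calc 2 * C * x ^ (2 - 2 * a - ε) / W ^ 2
        ≤ 2 * C * x ^ (2 - 2 * a - ε) / (c * x ^ (1 - a)) ^ 2 := by gcongr
      _ = 2 * C / c ^ 2 * x ^ (-ε) := by
        rw [mul_pow, ← Real.rpow_mul_natCast hx.le,
          show 2 - 2 * a - ε = (1 - a) * (2 : ℕ) + -ε by push_cast; ring, Real.rpow_add hx]
        field_simp
  calc V / W ^ 2 ≤ (M * W + 2 * C * x ^ (2 - 2 * a - ε)) / W ^ 2 := by gcongr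
    _ ≤ _ := by rw [add_div]; exact add_le_add hfirst hsecond

lemma tendsto_div_of_monotone_of_tendsto_subseq {S W : ℕ → ℝ} {φ : ℕ → ℕ} {l : ℝ}
    (hφ : StrictMono φ) (hS0 : ∀ n, 0 ≤ S n) (hS : Monotone S) (hW : Monotone W)
    (hW0 : 0 < W (φ 0)) (hlim : Tendsto (fun k ↦ S (φ k) / W (φ k)) atTop (𝓝 l))
    (hratio : Tendsto (fun k ↦ W (φ (k + 1)) / W (φ k)) atTop (𝓝 1)) :
    Tendsto (fun N ↦ S N / W N) atTop (𝓝 l) := by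
  have hWpos : ∀ k, 0 < W (φ k) := fun k ↦ hW0.trans_le (hW (hφ.monotone k.zero_le))
  have hup : Tendsto (fun k ↦ S (φ (k + 1)) / W (φ k)) atTop (𝓝 l) := by
    have := (hlim.comp (tendsto_add_atTop_nat 1)).mul hratio
    rw [mul_one] at this
    exact this.congr fun k ↦ div_mul_div_cancel₀ (hWpos _).ne'
  have hlow : Tendsto (fun k ↦ S (φ k) / W (φ (k + 1))) atTop (𝓝 l) := by
    have := hlim.div hratio one_ne_zero
    rw [div_one] at this
    exact this.congr fun k ↦ div_div_div_cancel_right₀ (hWpos _).ne' _ _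
  -- `κ N` is the index with `φ (κ N) ≤ N < φ (κ N + 1)`, once `φ 0 ≤ N`
  set κ : ℕ → ℕ := fun N ↦ Nat.findGreatest (fun j ↦ φ j ≤ N) N
  have hκ : Tendsto κ atTop atTop := tendsto_atTop_atTop.mpr fun K ↦
    ⟨φ K, fun N hN ↦ Nat.le_findGreatest (hφ.le_apply.trans hN) hN⟩
  have hκ_le : ∀ N, φ 0 ≤ N → φ (κ N) ≤ N := fun N hN ↦
    Nat.findGreatest_spec (P := fun j ↦ φ j ≤ N) (Nat.zero_le N) hN
  have hκ_lt : ∀ N, N < φ (κ N + 1) := fun N ↦ by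
    by_contra! h
    exact Nat.findGreatest_is_greatest (Nat.lt_succ_self _) (hφ.le_apply.trans h) h
  refine tendsto_of_tendsto_of_tendsto_of_le_of_le' (hlow.comp hκ) (hup.comp hκ) ?_ ?_
  · filter_upwards [eventually_ge_atTop (φ 0)] with N hN
    exact div_le_div₀ (hS0 _) (hS (hκ_le N hN)) ((hWpos _).trans_le (hW (hκ_le N hN)))
      (hW (hκ_lt N).le)
  · filter_upwards [eventually_ge_atTop (φ 0)] with N hN
    exact div_le_div₀ (hS0 _) (hS (hκ_lt N).le) (hWpos _) (hW (hκ_le N hN))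

section Probability

variable {Ω : Type*} {mΩ : MeasurableSpace Ω} {μ : Measure Ω}

lemma variance_sum_Icc_le [IsProbabilityMeasure μ] {X : ℕ → Ω → ℝ} {M : ℝ}
    (hX : ∀ n, AEMeasurable (X n) μ) (hbd : ∀ n, ∀ᵐ ω ∂μ, X n ω ∈ Set.Icc 0 M) (N : ℕ) :
    Var[fun ω ↦ ∑ n ∈ Icc 1 N, X n ω; μ] ≤ M * ∑ n ∈ Icc 1 N, μ[X n]
      + 2 * ∑ n ∈ Icc 1 N, ∑ m ∈ Icc (n + 1) N, cov[X n, X m; μ] := by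
  have hIcc : ∀ n, {m ∈ Icc 1 N | n < m} = Icc (n + 1) N := fun n ↦ by ext; simp; omega
  rw [variance_fun_sum' fun n _ ↦ memLp_of_bounded (hbd n) (hX n).aestronglyMeasurable 2,
    sum_sum_eq_sum_add_two_mul_sum_lt _ _ fun n m ↦ covariance_comm _ _]
  simp only [hIcc, mul_sum]
  gcongr with n
  have hmean : 0 ≤ μ[X n] := integral_nonneg_of_ae <| (hbd n).mono fun _ h ↦ h.1
  calc cov[X n, X n; μ] = Var[X n; μ] := covariance_self (hX n)
    _ ≤ (M - μ[X n]) * (μ[X n] - 0) := variance_le_sub_mul_sub (hbd n) (hX n)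
    _ ≤ M * μ[X n] := by nlinarith

lemma variance_sum_Icc_div_sq_le [IsProbabilityMeasure μ] {X : ℕ → Ω → ℝ} {M a c C ε : ℝ}
    (hX : ∀ n, AEMeasurable (X n) μ) (hbd : ∀ n, ∀ᵐ ω ∂μ, X n ω ∈ Set.Icc 0 M)
    (ha : 0 ≤ a) (hc : 0 < c) (hC : 0 ≤ C)
    (hmean : ∀ n : ℕ, 1 ≤ n → μ[X n] = c * (n : ℝ) ^ (-a)) {N : ℕ} (hN : 1 ≤ N)
    (hcov : ∑ n ∈ Icc 1 N, ∑ m ∈ Icc (n + 1) N, cov[X n, X m; μ]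
      ≤ C * (N : ℝ) ^ (2 - 2 * a - ε)) :
    Var[fun ω ↦ ∑ n ∈ Icc 1 N, X n ω; μ] / μ[fun ω ↦ ∑ n ∈ Icc 1 N, X n ω] ^ 2
      ≤ M / c * (N : ℝ) ^ (-(1 - a)) + 2 * C / c ^ 2 * (N : ℝ) ^ (-ε) := by
  have hXL2 : ∀ n, MemLp (X n) 2 μ := fun n ↦
    memLp_of_bounded (hbd n) (hX n).aestronglyMeasurable 2
  have hM : 0 ≤ M := let ⟨_, hω⟩ := (hbd 0).exists; hω.1.trans hω.2
  have hW : ∑ n ∈ Icc 1 N, μ[X n] = ∑ n ∈ Icc 1 N, c * (n : ℝ) ^ (-a) :=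
    sum_congr rfl fun n hn ↦ hmean n (mem_Icc.mp hn).1
  have hvar := variance_sum_Icc_le hX hbd N
  rw [hW] at hvar
  rw [integral_finsetSum _ fun n _ ↦ (hXL2 n).integrable one_le_two, hW]
  exact div_sq_le_rpow_neg_add_rpow_neg (by exact_mod_cast hN) hc hM hC
    (mul_rpow_one_sub_le_sum_Icc ha hc.le hN) (by linarith)

lemma ae_tendsto_zero_of_summable_integral_sq {Z : ℕ → Ω → ℝ} (hZ : ∀ k, MemLp (Z k) 2 μ)
    (hsum : Summable fun k ↦ ∫ ω, Z k ω ^ 2 ∂μ) :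
    ∀ᵐ ω ∂μ, Tendsto (fun k ↦ Z k ω) atTop (𝓝 0) := by
  have hmeas : ∀ k, AEMeasurable (fun ω ↦ ENNReal.ofReal (Z k ω ^ 2)) μ :=
    fun k ↦ ((hZ k).aestronglyMeasurable.aemeasurable.pow_const 2).ennreal_ofReal
  have hfin : ∫⁻ ω, ∑' k, ENNReal.ofReal (Z k ω ^ 2) ∂μ ≠ ⊤ := by
    rw [lintegral_tsum hmeas]
    simp_rw [← ofReal_integral_eq_lintegral_ofReal (hZ _).integrable_sq
      (ae_of_all _ fun _ ↦ sq_nonneg _)]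
    rw [← ENNReal.ofReal_tsum_of_nonneg (fun k ↦ integral_nonneg fun _ ↦ sq_nonneg _) hsum]
    exact ENNReal.ofReal_ne_top
  filter_upwards [ae_lt_top' (AEMeasurable.tsum hmeas) hfin] with ω hω
  have hsq : Summable fun k ↦ Z k ω ^ 2 := by
    simpa [ENNReal.toReal_ofReal (sq_nonneg _)] using ENNReal.summable_toReal hω.ne
  refine (tendsto_zero_iff_abs_tendsto_zero _).mpr ?_
  simpa [Real.sqrt_sq_eq_abs, Function.comp_def] using hsq.tendsto_atTop_zero.sqrt

lemma ae_tendsto_div_integral_of_summable_variance [IsFiniteMeasure μ] {Y : ℕ → Ω → ℝ}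
    (hY : ∀ k, MemLp (Y k) 2 μ) (hmean : ∀ k, μ[Y k] ≠ 0)
    (hsum : Summable fun k ↦ Var[Y k; μ] / μ[Y k] ^ 2) :
    ∀ᵐ ω ∂μ, Tendsto (fun k ↦ Y k ω / μ[Y k]) atTop (𝓝 1) := by
  have hsq : ∀ k, ∫ ω, (Y k ω / μ[Y k] - 1) ^ 2 ∂μ = Var[Y k; μ] / μ[Y k] ^ 2 := fun k ↦ by
    rw [variance_eq_integral (hY k).aestronglyMeasurable.aemeasurable, ← integral_div]
    congr with ω
    field_simp [hmean k]
  have hZ : ∀ k, MemLp (fun ω ↦ Y k ω / μ[Y k] - 1) 2 μ := fun k ↦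
    ((hY k).mul_const (μ[Y k])⁻¹).sub (memLp_const 1)
  filter_upwards [ae_tendsto_zero_of_summable_integral_sq hZ (by simpa only [hsq] using hsum)]
    with ω hω
  simpa using hω.add_const 1

lemma exists_pow_ae_tendsto_div_integral [IsFiniteMeasure μ] {Y : ℕ → Ω → ℝ} {A B α β : ℝ}
    (hY : ∀ N, MemLp (Y N) 2 μ) (hmean : ∀ N, 1 ≤ N → μ[Y N] ≠ 0) (hα : 0 < α) (hβ : 0 < β)
    (hvar : ∀ N : ℕ, 1 ≤ N →
      Var[Y N; μ] / μ[Y N] ^ 2 ≤ A * (N : ℝ) ^ (-α) + B * (N : ℝ) ^ (-β)) :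
    ∃ m : ℕ, 0 < m ∧
      ∀ᵐ ω ∂μ, Tendsto (fun k ↦ Y ((k + 1) ^ m) ω / μ[Y ((k + 1) ^ m)]) atTop (𝓝 1) := by
  obtain ⟨m, hm⟩ := exists_nat_gt (max (1 / α) (1 / β))
  have hmα : 1 < m * α := by
    have := (le_max_left _ _).trans_lt hm
    rwa [div_lt_iff₀ hα] at this
  have hmβ : 1 < m * β := by
    have := (le_max_right _ _).trans_lt hm
    rwa [div_lt_iff₀ hβ] at this
  have hpow : ∀ k : ℕ, 1 ≤ (k + 1) ^ m := fun k ↦ Nat.one_le_pow _ _ k.succ_pos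
  refine ⟨m, Nat.pos_of_ne_zero fun h ↦ by norm_num [h] at hmα,
    ae_tendsto_div_integral_of_summable_variance (fun k ↦ hY _) (fun k ↦ hmean _ (hpow k)) ?_⟩
  refine Summable.of_nonneg_of_le (fun k ↦ div_nonneg (variance_nonneg _ _) (sq_nonneg _))
    (fun k ↦ hvar _ (hpow k)) ?_
  exact ((summable_natCast_succ_pow_rpow_neg hmα).mul_left A).add
    ((summable_natCast_succ_pow_rpow_neg hmβ).mul_left B)

end Probability

theorem stmt0 {Ω : Type*} [MeasurableSpace Ω] (P : Measure Ω) [IsProbabilityMeasure P]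
    (X : ℕ → Ω → ℝ) (hmeas : ∀ n, Measurable (X n))
    (M : ℝ) (hbd : ∀ n, ∀ᵐ ω ∂P, |X n ω| ≤ M)
    (hpos : ∀ n, ∀ᵐ ω ∂P, 0 ≤ X n ω)
    (a : ℝ) (ha : a ∈ Set.Ioo (0:ℝ) 1) (c : ℝ) (hc : 0 < c)
    (hmean : ∀ n : ℕ, 1 ≤ n → ∫ ω, X n ω ∂P = c * (n : ℝ) ^ (-a))
    (C ε : ℝ) (hC : 0 < C) (hε : 0 < ε)
    (hcov : ∀ N : ℕ, ∑ n ∈ Finset.Icc 1 N, ∑ m ∈ Finset.Icc (n+1) N,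
        ((∫ ω, X n ω * X m ω ∂P) - (∫ ω, X n ω ∂P) * (∫ ω, X m ω ∂P))
      ≤ C * (N : ℝ) ^ (2 - 2*a - ε)) :
    ∀ᵐ ω ∂P, Tendsto (fun N : ℕ =>
        (∑ n ∈ Finset.Icc 1 N, X n ω) / (∑ n ∈ Finset.Icc 1 N, ∫ ω', X n ω' ∂P))
      atTop (𝓝 1) := by
  obtain ⟨ha0, ha1⟩ := ha
  set w : ℕ → ℝ := fun n ↦ c * (n : ℝ) ^ (-a)
  have hXIcc : ∀ n, ∀ᵐ ω ∂P, X n ω ∈ Set.Icc 0 M := fun n ↦ by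
    filter_upwards [hpos n, hbd n] with ω h0 hM using ⟨h0, (le_abs_self _).trans hM⟩
  have hXL2 : ∀ n, MemLp (X n) 2 P := fun n ↦
    memLp_of_bounded (hXIcc n) (hmeas n).aestronglyMeasurable 2
  have hW : ∀ N : ℕ, ∑ n ∈ Icc 1 N, ∫ ω, X n ω ∂P = ∑ n ∈ Icc 1 N, w n := fun N ↦
    sum_congr rfl fun n hn ↦ hmean n (mem_Icc.mp hn).1
  have hES : ∀ N : ℕ, P[fun ω ↦ ∑ n ∈ Icc 1 N, X n ω] = ∑ n ∈ Icc 1 N, w n := fun N ↦ by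
    rw [integral_finsetSum _ fun n _ ↦ (hXL2 n).integrable one_le_two, hW]
  have hWpos : ∀ N : ℕ, 1 ≤ N → 0 < ∑ n ∈ Icc 1 N, w n := fun N hN ↦
    (by positivity : 0 < c * (N : ℝ) ^ (1 - a)).trans_le
      (mul_rpow_one_sub_le_sum_Icc ha0.le hc.le hN)
  obtain ⟨m, hm, hsub⟩ := exists_pow_ae_tendsto_div_integral
    (fun N ↦ memLp_finsetSum _ fun n _ ↦ hXL2 n) (fun N hN ↦ (hES N ▸ hWpos N hN).ne')
    (by linarith : 0 < 1 - a) hε fun N hN ↦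
      variance_sum_Icc_div_sq_le (fun n ↦ (hmeas n).aemeasurable) hXIcc ha0.le hc hC.le hmean hN
        (by simpa only [covariance_eq_sub (hXL2 _) (hXL2 _), Pi.mul_apply] using hcov N)
  have hφ : StrictMono fun k : ℕ ↦ (k + 1) ^ m := fun _ _ hkl ↦
    Nat.pow_lt_pow_left (by omega) hm.ne'
  have hφ1 : ∀ k : ℕ, 1 ≤ (k + 1) ^ m := fun k ↦ Nat.one_le_pow _ _ k.succ_pos
  have hratio := tendsto_sum_Icc_div_sum_Icc (antitoneOn_mul_rpow_neg ha0.le hc.le)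
    (fun n ↦ by positivity) hφ.monotone hφ1 (fun k ↦ hWpos _ (hφ1 k)) (tendsto_succ_pow_div_pow m)
  filter_upwards [hsub, ae_all_iff.mpr hpos] with ω hω hω0
  simp only [hES] at hω
  simp only [hW]
  exact tendsto_div_of_monotone_of_tendsto_subseq hφ (fun N ↦ sum_nonneg fun n _ ↦ hω0 n)
    (monotone_sum_Icc_of_nonneg hω0) (monotone_sum_Icc_of_nonneg fun n ↦ by positivity)
    (hWpos _ (hφ1 0)) hω hratio
end

section
/- Let $V$ be a real or complex inner product space, $N\in\mathbb{N}$, and $v_1,\dots,v_N\in V$. Then for every integer $M$ with $1\le M\le N$, $\big\|\sum_{n=1}^N v_n\big\|^2 \le 2M^{-1}N\sum_{n=1}^N\|v_n\|^2 + 4M^{-1}N\sum_{m=1}^M\Big|\sum_{n=1}^{N-m}\langle v_{n+m},v_n\rangle\Big|$, where the norm is induced by the inner product. -/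
/-!
Extend `v` by zero to a finitely supported `u : ℤ → V` and average over `M` shifts: with
`w j = ∑_{m<M} u (j + m)` we get `M • ∑ u = ∑_j w j`, where only `N + M ≤ 2N` indices `j`
contribute. Cauchy–Schwarz then bounds `M² ‖∑ u‖²` by `2N ∑_j ‖w j‖²`, and expanding `‖w j‖²`
turns `∑_j ‖w j‖²` into `∑_{m,m'<M} Re c(m - m')`, where `c d = ∑_n ⟪u (n + d), u n⟫` is the
autocorrelation of `u`. Since `‖c (-d)‖ = ‖c d‖`, every row of this Toeplitz sum is at most
`‖c 0‖ + 2 ∑_{d=1}^{M} ‖c d‖`, and `‖c 0‖ = ∑ ‖v n‖²`.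
-/

open Finset Function

theorem Finset.sum_comp_add_right_eq_finsum {G E : Type*} [AddGroup G] [AddCommMonoid E]
    {f : G → E} {t : Finset G} (c : G) (h : support (fun j ↦ f (j + c)) ⊆ t) :
    ∑ j ∈ t, f (j + c) = ∑ᶠ k, f k :=
  (finsum_eq_sum_of_support_subset _ h).symm.trans (finsum_comp_equiv (Equiv.addRight c))

theorem Finset.sum_comp_le_sum_of_injOn {ι κ R : Type*} [AddCommMonoid R] [PartialOrder R]
    [IsOrderedAddMonoid R] [DecidableEq κ] {s : Finset ι} {t : Finset κ} {g : κ → R}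
    (e : ι → κ) (he : Set.InjOn e s) (hst : ∀ i ∈ s, e i ∈ t) (hg : ∀ k ∈ t, 0 ≤ g k) :
    ∑ i ∈ s, g (e i) ≤ ∑ k ∈ t, g k := by
  rw [← sum_image he]
  exact sum_le_sum_of_subset_of_nonneg (by simpa [subset_iff] using hst) fun k hk _ ↦ hg k hk

theorem finsum_eq_sum_natCast_of_support_subset {E : Type*} [AddCommMonoid E] {f : ℤ → E}
    {s : Finset ℕ} (h : support f ⊆ Nat.cast '' s) : ∑ᶠ n, f n = ∑ n ∈ s, f n := by
  rw [finsum_eq_sum_of_support_subset f (s := s.image Nat.cast) (by simpa),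
    sum_image Nat.cast_injective.injOn]

theorem norm_sum_sq_le_card_mul {ι E : Type*} [SeminormedAddCommGroup E] (s : Finset ι)
    (f : ι → E) : ‖∑ i ∈ s, f i‖ ^ 2 ≤ #s * ∑ i ∈ s, ‖f i‖ ^ 2 :=
  (pow_le_pow_left₀ (norm_nonneg _) (norm_sum_le s f) 2).trans sq_sum_le_card_mul_sum_sq

theorem norm_sum_inner_self {𝕜 V ι : Type*} [RCLike 𝕜] [NormedAddCommGroup V]
    [InnerProductSpace 𝕜 V] (s : Finset ι) (f : ι → V) :
    ‖∑ i ∈ s, inner 𝕜 (f i) (f i)‖ = ∑ i ∈ s, ‖f i‖ ^ 2 := by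
  simp_rw [inner_self_eq_norm_sq_to_K, ← RCLike.ofReal_pow, ← RCLike.ofReal_sum,
    RCLike.norm_ofReal]
  exact abs_of_nonneg (by positivity)

/-- Split the row at the diagonal: `m' ↦ m - m'` and `m' ↦ m' - m` are injective on the two
halves. -/
theorem sum_range_comp_sub_le {g : ℤ → ℝ} (hg : 0 ≤ g) (hg_neg : ∀ d, g (-d) = g d)
    {M m : ℕ} (hm : m < M) :
    ∑ m' ∈ range M, g (m - m') ≤ g 0 + 2 * ∑ d ∈ Icc 1 M, g d := by
  rw [← sum_filter_add_sum_filter_not (range M) (· ≤ m), two_mul, ← add_assoc,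
    ← Nat.cast_zero, ← sum_insert (f := fun d : ℕ ↦ g d) (s := Icc 1 M) (by simp)]
  gcongr
  · rw [sum_congr rfl fun m' hm' ↦ by rw [← Nat.cast_sub (mem_filter.1 hm').2]]
    refine sum_comp_le_sum_of_injOn (fun m' ↦ m - m') ?_ ?_ fun k _ ↦ hg k
    · intro i hi j hj h; simp_all; omega
    · intro i hi; simp only [mem_filter, mem_range] at hi; simp only [mem_insert, mem_Icc]; omega
  · rw [sum_congr rfl fun m' hm' ↦ by
      rw [← hg_neg, neg_sub, ← Nat.cast_sub (le_of_not_ge (mem_filter.1 hm').2)]]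
    refine sum_comp_le_sum_of_injOn (fun m' ↦ m' - m) ?_ ?_ fun k _ ↦ hg k
    · intro i hi j hj h; simp_all; omega
    · intro i hi; simp only [mem_filter, mem_range] at hi; simp only [mem_Icc]; omega

section Autocorrelation

variable (𝕜 : Type*) {V : Type*} [RCLike 𝕜] [NormedAddCommGroup V] [InnerProductSpace 𝕜 V]

noncomputable def autocorr (u : ℤ → V) (d : ℤ) : 𝕜 := ∑ᶠ n, inner 𝕜 (u (n + d)) (u n)

variable {𝕜}

theorem norm_autocorr_neg (u : ℤ → V) (d : ℤ) : ‖autocorr 𝕜 u (-d)‖ = ‖autocorr 𝕜 u d‖ := by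
  have : autocorr 𝕜 u (-d) = starAddEquiv (autocorr 𝕜 u d) := by
    rw [autocorr, autocorr, AddEquiv.map_finsum, ← finsum_comp_equiv (Equiv.addRight d)]
    congr 1 with n
    simp [inner_conj_symm]
  rw [this, starAddEquiv_apply, norm_star]

variable {u : ℤ → V} {a : ℤ} {N M : ℕ}

theorem support_comp_add_subset (hu : support u ⊆ Set.Ioc a (a + N)) {m : ℕ} (hm : m < M) :
    support (fun j ↦ u (j + m)) ⊆ Set.Ioc (a - M) (a + N) := by
  intro j hj
  have := hu hj
  simp only [Set.mem_Ioc] at this ⊢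
  omega

theorem sum_Ioc_sum_range_eq (hu : support u ⊆ Set.Ioc a (a + N)) :
    ∑ j ∈ Ioc (a - M) (a + N), ∑ m ∈ range M, u (j + m) = M • ∑ᶠ n, u n := by
  rw [sum_comm, ← card_range M, ← sum_const, card_range]
  refine sum_congr rfl fun m hm ↦ sum_comp_add_right_eq_finsum _ ?_
  rw [coe_Ioc]
  exact support_comp_add_subset hu (mem_range.1 hm)

theorem sum_Ioc_norm_sum_range_sq_eq (hu : support u ⊆ Set.Ioc a (a + N)) :
    ∑ j ∈ Ioc (a - M) (a + N), ‖∑ m ∈ range M, u (j + m)‖ ^ 2 =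
      ∑ m ∈ range M, ∑ m' ∈ range M, RCLike.re (autocorr 𝕜 u (m - m')) := by
  simp_rw [← inner_self_eq_norm_sq (𝕜 := 𝕜), sum_inner, inner_sum, map_sum]
  rw [sum_comm]
  refine sum_congr rfl fun m _ ↦ ?_
  rw [sum_comm]
  refine sum_congr rfl fun m' hm' ↦ ?_
  rw [← map_sum]
  congr 1
  have hshift : ∀ j : ℤ, j + m = j + m' + (m - m' : ℤ) := fun j ↦ by ring
  simp_rw [hshift]
  refine sum_comp_add_right_eq_finsum (f := fun k ↦ inner 𝕜 (u (k + (m - m' : ℤ))) (u k)) _ ?_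
  rw [coe_Ioc]
  refine subset_trans ?_ (support_comp_add_subset hu (mem_range.1 hm'))
  intro j hj h
  simp [h] at hj

theorem norm_finsum_sq_le_autocorr (hu : support u ⊆ Set.Ioc a (a + N)) (hM : 1 ≤ M)
    (hMN : M ≤ N) :
    ‖∑ᶠ n, u n‖ ^ 2 ≤ 2 * (M : ℝ)⁻¹ * N * ‖autocorr 𝕜 u 0‖ +
      4 * (M : ℝ)⁻¹ * N * ∑ d ∈ Icc 1 M, ‖autocorr 𝕜 u d‖ := by
  set B := ‖autocorr 𝕜 u 0‖ + 2 * ∑ d ∈ Icc 1 M, ‖autocorr 𝕜 u d‖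
  have hB : 0 ≤ B := by positivity
  have hcard : #(Ioc (a - M) (a + N)) = N + M := by rw [Int.card_Ioc]; omega
  have hcs : (M : ℝ) ^ 2 * ‖∑ᶠ n, u n‖ ^ 2 ≤
      (N + M) * ∑ j ∈ Ioc (a - M) (a + N), ‖∑ m ∈ range M, u (j + m)‖ ^ 2 := by
    have := norm_sum_sq_le_card_mul (Ioc (a - M) (a + N)) fun j ↦ ∑ m ∈ range M, u (j + m)
    rwa [sum_Ioc_sum_range_eq hu, RCLike.norm_nsmul 𝕜, nsmul_eq_mul, mul_pow, hcard,
      Nat.cast_add] at this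
  have htoeplitz : ∑ j ∈ Ioc (a - M) (a + N), ‖∑ m ∈ range M, u (j + m)‖ ^ 2 ≤ M * B := by
    rw [sum_Ioc_norm_sum_range_sq_eq (𝕜 := 𝕜) hu]
    calc _ ≤ ∑ m ∈ range M, ∑ m' ∈ range M, ‖autocorr 𝕜 u (m - m')‖ := by
          gcongr; exact RCLike.re_le_norm _
      _ ≤ ∑ _m ∈ range M, B := by
          gcongr with m hm
          exact sum_range_comp_sub_le (g := fun d ↦ ‖autocorr 𝕜 u d‖) (fun _ ↦ norm_nonneg _)
            (norm_autocorr_neg u) (mem_range.1 hm)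
      _ = M * B := by rw [sum_const, card_range, nsmul_eq_mul]
  have hMpos : (0 : ℝ) < M := by exact_mod_cast hM
  have hMN' : (M : ℝ) ≤ N := by exact_mod_cast hMN
  have key : (M : ℝ) * ‖∑ᶠ n, u n‖ ^ 2 ≤ 2 * N * B := by
    have := hcs.trans (mul_le_mul_of_nonneg_left htoeplitz (by positivity))
    nlinarith [mul_nonneg (sub_nonneg.2 hMN') hB]
  calc ‖∑ᶠ n, u n‖ ^ 2 ≤ (M : ℝ)⁻¹ * (2 * N * B) := by
        rw [inv_mul_eq_div, le_div_iff₀ hMpos, mul_comm]; exact key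
    _ = _ := by ring

end Autocorrelation

section ExtendByZero

variable {V : Type*} (N : ℕ) (v : ℕ → V)

noncomputable def extendByZero [Zero V] : ℤ → V := (Set.Ioc 0 (N : ℤ)).indicator fun n ↦ v n.toNat

theorem support_extendByZero [Zero V] : support (extendByZero N v) ⊆ Set.Ioc 0 N :=
  Set.support_indicator_subset

theorem extendByZero_natCast [Zero V] {n : ℕ} (hn : n ∈ Icc 1 N) : extendByZero N v n = v n := by
  rw [extendByZero, Set.indicator_of_mem (by simp at hn ⊢; omega)]
  rfl

theorem finsum_extendByZero [AddCommMonoid V] :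
    ∑ᶠ n, extendByZero N v n = ∑ n ∈ Icc 1 N, v n := by
  rw [finsum_eq_sum_natCast_of_support_subset (s := Icc 1 N)]
  · exact sum_congr rfl fun n hn ↦ extendByZero_natCast N v hn
  · intro n hn
    have := support_extendByZero N v hn
    simp only [Set.mem_Ioc] at this
    exact ⟨n.toNat, by simp; omega, by omega⟩

theorem autocorr_extendByZero {𝕜 : Type*} [RCLike 𝕜] [NormedAddCommGroup V]
    [InnerProductSpace 𝕜 V] (d : ℕ) :
    autocorr 𝕜 (extendByZero N v) d = ∑ n ∈ Icc 1 (N - d), inner 𝕜 (v (n + d)) (v n) := by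
  rw [autocorr, finsum_eq_sum_natCast_of_support_subset (s := Icc 1 (N - d))]
  · refine sum_congr rfl fun n hn ↦ ?_
    simp only [mem_Icc] at hn
    rw [← Nat.cast_add, extendByZero_natCast N v (by simp; omega),
      extendByZero_natCast N v (by simp; omega)]
  · intro n hn
    have h₁ : extendByZero N v (n + d) ≠ 0 := fun h ↦ hn (by simp [h])
    have h₂ : extendByZero N v n ≠ 0 := fun h ↦ hn (by simp [h])
    have := support_extendByZero N v h₁
    have := support_extendByZero N v h₂
    simp only [Set.mem_Ioc] at *
    exact ⟨n.toNat, by simp; omega, by omega⟩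

end ExtendByZero

/-- Finitary Van der Corput inequality in an inner product space. -/
theorem stmt2 {𝕜 V : Type*} [RCLike 𝕜] [NormedAddCommGroup V] [InnerProductSpace 𝕜 V]
    (N : ℕ) (v : ℕ → V) (M : ℕ) (hM1 : 1 ≤ M) (hMN : M ≤ N) :
    ‖∑ n ∈ Finset.Icc 1 N, v n‖ ^ 2 ≤
      2 * (M:ℝ)⁻¹ * N * ∑ n ∈ Finset.Icc 1 N, ‖v n‖ ^ 2 +
      4 * (M:ℝ)⁻¹ * N * ∑ m ∈ Finset.Icc 1 M,
        ‖∑ n ∈ Finset.Icc 1 (N - m), (inner 𝕜 (v (n + m)) (v n) : 𝕜)‖ := by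
  have h := norm_finsum_sq_le_autocorr (𝕜 := 𝕜) (a := 0)
    (by simpa using support_extendByZero N v) hM1 hMN
  have h₀ : ‖autocorr 𝕜 (extendByZero N v) 0‖ = ∑ n ∈ Icc 1 N, ‖v n‖ ^ 2 := by
    have := autocorr_extendByZero (𝕜 := 𝕜) N v 0
    rw [Nat.cast_zero] at this
    simp only [this, Nat.sub_zero, add_zero, norm_sum_inner_self]
  rw [finsum_extendByZero, h₀] at h
  simpa only [autocorr_extendByZero] using h
end

section
/- Let $(Y,\mathcal{Y},\nu,S)$ be a measure-preserving system and $(E_n)_{n\in\mathbb{N}}$ a sequence of measurable sets having decay of correlation against $L^1(\nu)$ with rate $\rho$. Then the sequence $E'_n := S^{-n}E_n$ satisfies property (P) with rate $C\rho$ for some constant $C>0$: for every finite increasing sequence $1\le n_1<\cdots<n_k$, $|\nu(E'_{n_1}\cap\cdots\cap E'_{n_k})-\nu(E'_{n_1})\nu(E'_{n_2}\cap\cdots\cap E'_{n_k})|\le C\rho(n_2-n_1)\nu(E'_{n_2}\cap\cdots\cap E'_{n_k})$. -/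
open MeasureTheory Filter Topology

/-- Property (P) with rate `ρ`. -/
def HasPropP {Ω : Type*} [MeasurableSpace Ω] (P : Measure Ω)
    (E : ℕ → Set Ω) (ρ : ℕ → ℝ) : Prop :=
  ∀ (k : ℕ) (n : Fin (k + 2) → ℕ), StrictMono n → 1 ≤ n 0 →
    |(P (⋂ i, E (n i))).toReal -
        (P (E (n 0))).toReal * (P (⋂ i : Fin (k + 1), E (n i.succ))).toReal| ≤
      ρ (n 1 - n 0) * (P (⋂ i : Fin (k + 1), E (n i.succ))).toReal

/-- The collection `(E_n)` has decay of correlation against `L¹(ν)` with rate `ρ`: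
there is `C > 0` with `|∫_{E_n} g ∘ S^m dν - ν(E_n) ∫ g dν| ≤ C ρ(m) ‖g‖_{L¹}`
for all `n, m` and all `g ∈ L¹(ν)` supported on `⋃ k, E k`. -/
def DecayAgainstL1 {Y : Type*} [MeasurableSpace Y] (ν : Measure Y) (S : Y → Y)
    (E : ℕ → Set Y) (ρ : ℕ → ℝ) : Prop :=
  ∃ C > 0, ∀ (n m : ℕ) (g : Y → ℝ), Integrable g ν →
    (∀ y, y ∉ ⋃ k, E k → g y = 0) →
    |(∫ y in E n, g (S^[m] y) ∂ν) - (ν (E n)).toReal * ∫ y, g y ∂ν| ≤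
      C * ρ m * ∫ y, |g y| ∂ν

/-!
Write `A := ⋂_{i ≥ 2} S^{-(n_i - n_2)} E_{n_i}`, a measurable subset of `E_{n_2}`. Then
`E'_{n_2} ∩ ⋯ ∩ E'_{n_k} = S^{-n_2} A` and
`E'_{n_1} ∩ ⋯ ∩ E'_{n_k} = S^{-n_1} (E_{n_1} ∩ S^{-(n_2 - n_1)} A)`, so by invariance of `ν`
property (P) is the decay of correlation tested against `g = 1_A`, for which `‖g‖_{L¹} = ∫ g = ν(A)`.
-/

lemma preimage_iterate_preimage_iterate_sub {α : Type*} (S : α → α) {a b : ℕ} (hab : a ≤ b)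
    (B : Set α) : S^[a] ⁻¹' (S^[b - a] ⁻¹' B) = S^[b] ⁻¹' B := by
  rw [← Set.preimage_comp, ← Function.iterate_add, Nat.sub_add_cancel hab]

lemma iInter_preimage_iterate_eq_preimage {α ι : Type*} (S : α → α) (n : ι → ℕ) (a : ℕ)
    (han : ∀ i, a ≤ n i) (F : ι → Set α) :
    ⋂ i, S^[n i] ⁻¹' F i = S^[a] ⁻¹' ⋂ i, S^[n i - a] ⁻¹' F i := by
  simp only [Set.preimage_iInter, preimage_iterate_preimage_iterate_sub S (han _)]

namespace DecayAgainstL1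

variable {Y : Type*} [MeasurableSpace Y] {ν : Measure Y} {S : Y → Y} {E : ℕ → Set Y}
  {ρ : ℕ → ℝ}

lemma abs_measure_inter_preimage_sub_le [IsFiniteMeasure ν] (hS : Measurable S)
    (h : DecayAgainstL1 ν S E ρ) :
    ∃ C > 0, ∀ (n m : ℕ) (A : Set Y), MeasurableSet A → A ⊆ ⋃ k, E k →
      |(ν (E n ∩ S^[m] ⁻¹' A)).toReal - (ν (E n)).toReal * (ν A).toReal| ≤
        C * ρ m * (ν A).toReal := by
  obtain ⟨C, hC, hdec⟩ := h
  refine ⟨C, hC, fun n m A hA hAE => ?_⟩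
  have hsupp : ∀ y, y ∉ ⋃ k, E k → A.indicator (fun _ => (1 : ℝ)) y = 0 :=
    fun y hy => Set.indicator_of_notMem (fun hyA => hy (hAE hyA)) _
  have key := hdec n m (A.indicator fun _ => 1) ((integrable_const (1 : ℝ)).indicator hA) hsupp
  have hcomp : (fun y => A.indicator (fun _ => (1 : ℝ)) (S^[m] y)) =
      (S^[m] ⁻¹' A).indicator fun _ => 1 :=
    funext fun y => (Set.indicator_comp_right (g := fun _ => (1 : ℝ)) _).symm
  have habs : (fun y => |A.indicator (fun _ => (1 : ℝ)) y|) = A.indicator fun _ => 1 :=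
    funext fun y => abs_of_nonneg (Set.indicator_nonneg (fun _ _ => zero_le_one) y)
  rw [hcomp, habs, setIntegral_indicator ((hS.iterate m) hA), integral_indicator_const _ hA,
    setIntegral_const] at key
  simpa only [smul_eq_mul, mul_one, measureReal_def] using key

end DecayAgainstL1

theorem stmt5_general {Y : Type*} [MeasurableSpace Y] (ν : Measure Y) [IsProbabilityMeasure ν]
    (S : Y → Y) (hS : MeasurePreserving S ν ν)
    (E : ℕ → Set Y) (hE : ∀ n, MeasurableSet (E n))
    (ρ : ℕ → ℝ)
    (hdecay : DecayAgainstL1 ν S E ρ) :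
    ∃ C > 0, HasPropP ν (fun n => S^[n] ⁻¹' E n) (fun m => C * ρ m) := by
  obtain ⟨C, hC, hcorr⟩ := hdecay.abs_measure_inter_preimage_sub_le hS.measurable
  refine ⟨C, hC, fun k n hn _ => ?_⟩
  have hn1 : ∀ i : Fin (k + 1), n 1 ≤ n i.succ := fun i =>
    hn.monotone (Fin.succ_le_succ_iff.mpr (Fin.zero_le i))
  set A := ⋂ i : Fin (k + 1), S^[n i.succ - n 1] ⁻¹' E (n i.succ)
  have hA : MeasurableSet A := .iInter fun i => (hS.iterate _).measurable (hE _)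
  have hAE : A ⊆ E (n 1) := Set.iInter_subset_of_subset 0 (by simp)
  have htail : ⋂ i : Fin (k + 1), S^[n i.succ] ⁻¹' E (n i.succ) = S^[n 1] ⁻¹' A :=
    iInter_preimage_iterate_eq_preimage S _ _ hn1 _
  have hfull :
      ⋂ i, S^[n i] ⁻¹' E (n i) = S^[n 0] ⁻¹' (E (n 0) ∩ S^[n 1 - n 0] ⁻¹' A) := by
    rw [Set.preimage_inter, preimage_iterate_preimage_iterate_sub S (hn.monotone (Fin.zero_le 1)),
      ← htail]
    ext y
    simp only [Set.mem_iInter, Set.mem_inter_iff, Fin.forall_fin_succ (n := k + 1)]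
  have hinv : ∀ j (B : Set Y), MeasurableSet B → ν (S^[j] ⁻¹' B) = ν B :=
    fun j B hB => (hS.iterate j).measure_preimage hB.nullMeasurableSet
  simp only [hfull, htail, hinv _ _ (hE _), hinv _ _ hA,
    hinv _ _ ((hE _).inter ((hS.iterate _).measurable hA))]
  exact hcorr _ _ A hA (hAE.trans (Set.subset_iUnion E _))

theorem stmt5 {Y : Type*} [MeasurableSpace Y] (ν : Measure Y) [IsProbabilityMeasure ν]
    (S : Y → Y) (hS : MeasurePreserving S ν ν)
    (E : ℕ → Set Y) (hE : ∀ n, MeasurableSet (E n))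
    (ρ : ℕ → ℝ) (hρ0 : ∀ n, 0 ≤ ρ n)
    (hdecay : DecayAgainstL1 ν S E ρ) :
    ∃ C > 0, HasPropP ν (fun n => S^[n] ⁻¹' E n) (fun m => C * ρ m) :=
  stmt5_general ν S hS E hE ρ hdecay
end

section
/- Let $(E_n)_{n\in\mathbb{N}}$ be measurable sets in a probability space satisfying property (P) with a decreasing summable rate $\rho$, and suppose $\mathbb{P}(E_n)=cn^{-a}$ for some $a\in(0,1)$, $c>0$. Then there exist $C>0$ and $\varepsilon>0$ such that for all $N$, $\sum_{n=1}^N\sum_{m=n+1}^N \operatorname{Cov}(\mathbb{1}_{E_n},\mathbb{1}_{E_m}) \le C N^{2-2a-\varepsilon}$. -/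
open MeasureTheory Filter Topology

theorem HasPropP.inter_sub_mul_le {Ω : Type*} [MeasurableSpace Ω] {P : Measure Ω}
    {E : ℕ → Set Ω} {ρ : ℕ → ℝ} (hP : HasPropP P E ρ) {n m : ℕ} (hn : 1 ≤ n) (hnm : n < m) :
    (P (E n ∩ E m)).toReal - (P (E n)).toReal * (P (E m)).toReal ≤
      ρ (m - n) * (P (E m)).toReal := by
  have hmono : StrictMono ![n, m] := Fin.strictMono_iff_lt_succ.mpr <| by simpa using hnm
  have h := hP 0 ![n, m] hmono hn
  have hpair : ⋂ i, E (![n, m] i) = E n ∩ E m := by ext; simp [Fin.forall_fin_two]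
  simp only [hpair, Fin.isValue, Matrix.cons_val_zero, Matrix.cons_val_succ,
    Matrix.cons_val_fin_one, Matrix.cons_val_one, Set.iInter_const] at h

  exact (abs_le.mp h).2

theorem sum_Icc_sub_le_tsum {ρ : ℕ → ℝ} (hρ0 : ∀ k, 0 ≤ ρ k) (hρ : Summable ρ) (n N : ℕ) :
    ∑ m ∈ Finset.Icc (n + 1) N, ρ (m - n) ≤ ∑' k, ρ k := by
  rw [← Finset.sum_image (g := (· - n)) fun x hx y hy h => by
    simp only [Finset.coe_Icc, Set.mem_Icc] at hx hy; simp only at h; omega]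
  exact hρ.sum_le_tsum _ fun k _ => hρ0 k

theorem Real.mul_rpow_sub_one_le_rpow_sub_rpow {p x : ℝ} (hp0 : 0 ≤ p) (hp1 : p ≤ 1)
    (hx : 1 ≤ x) : p * x ^ (p - 1) ≤ x ^ p - (x - 1) ^ p := by
  have hx0 : 0 < x := by linarith
  have hbern : (1 + -x⁻¹) ^ p ≤ 1 + p * -x⁻¹ :=
    rpow_one_add_le_one_add_mul_self (by simpa using inv_le_one_of_one_le₀ hx) hp0 hp1
  calc p * x ^ (p - 1) = x ^ p - x ^ p * (1 + p * -x⁻¹) := by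
        rw [Real.rpow_sub_one hx0.ne']; ring
    _ ≤ x ^ p - x ^ p * (1 + -x⁻¹) ^ p := by gcongr
    _ = x ^ p - (x - 1) ^ p := by
        rw [← Real.mul_rpow hx0.le (by simpa using inv_le_one_of_one_le₀ hx)]
        congr 2; field_simp; ring

theorem sum_Icc_rpow_neg_le {a : ℝ} (ha0 : 0 ≤ a) (ha1 : a < 1) (N : ℕ) :
    ∑ m ∈ Finset.Icc 1 N, (m : ℝ) ^ (-a) ≤ (N : ℝ) ^ (1 - a) / (1 - a) := by
  induction N with
  | zero => simp [Real.zero_rpow (by linarith : 1 - a ≠ 0)]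
  | succ N ih =>
    have hstep := Real.mul_rpow_sub_one_le_rpow_sub_rpow (p := 1 - a) (x := N + 1)
      (by linarith) (by linarith) (by simp)
    rw [Finset.sum_Icc_succ_top (by omega), le_div_iff₀ (by linarith)]
    rw [le_div_iff₀ (by linarith)] at ih
    push_cast
    rw [show 1 - a - 1 = -a by ring, add_sub_cancel_right] at hstep
    linarith

theorem HasPropP.sum_inter_sub_mul_le {Ω : Type*} [MeasurableSpace Ω] {P : Measure Ω}
    {E : ℕ → Set Ω} {ρ : ℕ → ℝ} (hP : HasPropP P E ρ) (hρ0 : ∀ k, 0 ≤ ρ k) (hρ : Summable ρ)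
    {n : ℕ} (hn : 1 ≤ n) {b : ℝ} (hb : ∀ m, n < m → (P (E m)).toReal ≤ b) (N : ℕ) :
    ∑ m ∈ Finset.Icc (n + 1) N,
        ((P (E n ∩ E m)).toReal - (P (E n)).toReal * (P (E m)).toReal) ≤
      (∑' k, ρ k) * b := by
  have hb0 : 0 ≤ b := ENNReal.toReal_nonneg.trans (hb (n + 1) n.lt_succ_self)
  calc _ ≤ ∑ m ∈ Finset.Icc (n + 1) N, ρ (m - n) * b := by
        refine Finset.sum_le_sum fun m hm => ?_
        have hnm : n < m := (Finset.mem_Icc.mp hm).1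
        exact (hP.inter_sub_mul_le hn hnm).trans (by gcongr; exacts [hρ0 _, hb m hnm])
    _ ≤ (∑' k, ρ k) * b := by
        rw [← Finset.sum_mul]; gcongr; exact sum_Icc_sub_le_tsum hρ0 hρ n N

theorem stmt6_general {Ω : Type*} [MeasurableSpace Ω] (P : Measure Ω)
    (E : ℕ → Set Ω)
    (ρ : ℕ → ℝ) (hρ0 : ∀ n, 0 ≤ ρ n) (hρsum : Summable ρ)
    (hP : HasPropP P E ρ)
    (a c : ℝ) (ha : a ∈ Set.Ioo (0:ℝ) 1) (hc : 0 < c)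
    (hmeasE : ∀ n : ℕ, 1 ≤ n → (P (E n)).toReal = c * (n:ℝ) ^ (-a)) :
    ∃ C > 0, ∃ ε > 0, ∀ N : ℕ,
      ∑ n ∈ Finset.Icc 1 N, ∑ m ∈ Finset.Icc (n+1) N,
        ((P (E n ∩ E m)).toReal - (P (E n)).toReal * (P (E m)).toReal) ≤
      C * (N:ℝ) ^ (2 - 2*a - ε) := by
  obtain ⟨ha0, ha1⟩ := ha
  set S := ∑' k, ρ k
  have hS : 0 ≤ S := tsum_nonneg hρ0
  have h1a : 0 < 1 - a := by linarith
  have hdecay (n : ℕ) (hn : 1 ≤ n) (m : ℕ) (hnm : n < m) :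
      (P (E m)).toReal ≤ c * (n : ℝ) ^ (-a) := by
    rw [hmeasE m (by omega)]
    exact mul_le_mul_of_nonneg_left (Real.rpow_le_rpow_of_nonpos (by exact_mod_cast hn)
      (by exact_mod_cast hnm.le) (by linarith)) hc.le
  refine ⟨c * (S + 1) / (1 - a), by positivity, 1 - a, h1a, fun N => ?_⟩
  calc _ ≤ ∑ n ∈ Finset.Icc 1 N, S * (c * (n : ℝ) ^ (-a)) := Finset.sum_le_sum fun n hn =>
        hP.sum_inter_sub_mul_le hρ0 hρsum (Finset.mem_Icc.mp hn).1
          (hdecay n (Finset.mem_Icc.mp hn).1) N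
    _ = c * S * ∑ n ∈ Finset.Icc 1 N, (n : ℝ) ^ (-a) := by
        rw [Finset.mul_sum]; exact Finset.sum_congr rfl fun _ _ => by ring
    _ ≤ c * S * ((N : ℝ) ^ (1 - a) / (1 - a)) := by
        gcongr; exact sum_Icc_rpow_neg_le ha0.le ha1 N
    _ ≤ c * (S + 1) / (1 - a) * (N : ℝ) ^ (2 - 2 * a - (1 - a)) := by
        rw [show 2 - 2 * a - (1 - a) = 1 - a by ring, mul_div_assoc', div_mul_eq_mul_div]
        gcongr; linarith

theorem stmt6 {Ω : Type*} [MeasurableSpace Ω] (P : Measure Ω) [IsProbabilityMeasure P]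
    (E : ℕ → Set Ω) (hE : ∀ n, MeasurableSet (E n))
    (ρ : ℕ → ℝ) (hρ0 : ∀ n, 0 ≤ ρ n) (hρdec : Antitone ρ) (hρsum : Summable ρ)
    (hP : HasPropP P E ρ)
    (a c : ℝ) (ha : a ∈ Set.Ioo (0:ℝ) 1) (hc : 0 < c)
    (hmeasE : ∀ n : ℕ, 1 ≤ n → (P (E n)).toReal = c * (n:ℝ) ^ (-a)) :
    ∃ C > 0, ∃ ε > 0, ∀ N : ℕ,
      ∑ n ∈ Finset.Icc 1 N, ∑ m ∈ Finset.Icc (n+1) N,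
        ((P (E n ∩ E m)).toReal - (P (E n)).toReal * (P (E m)).toReal) ≤
      C * (N:ℝ) ^ (2 - 2*a - ε) :=
  stmt6_general P E ρ hρ0 hρsum hP a c ha hc hmeasE
end

section
/- Let $(E_n)_{n\in\mathbb{N}}$ be measurable sets in a probability space satisfying property (P) with a decreasing summable rate $\rho$, with $\mathbb{P}(E_n)=cn^{-a}$ for some $a\in(0,1/2)$, $c>0$. Then for almost every $\omega\in\Omega$, the set $\{n\in\mathbb{N}:\omega\in E_n\}$ is infinite, and moreover $\lim_{N\to\infty}|\{1\le n\le N:\omega\in E_n\}|/\sum_{n=1}^N \mathbb{P}(E_n) = 1$. -/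
/-
Let `S_N = ∑_{n ≤ N} 1_{E_n}` and `F_N = ∑_{n ≤ N} P(E_n)`, so that `F_N ≍ N^{1-a}`. Property (P) for
pairs charges each covariance `cov(1_{E_m}, 1_{E_n})`, `m < n`, to `ρ(n - m) P(E_n)`, whence
`Var S_N ≤ 2 (1 + ∑ ρ) F_N`. Along the squares, `Var (S_{k²} / F_{k²}) ≲ k^{2a-2}` is summable because
`a < 1/2`, so the sum of the squared deviations has finite expectation and `S_{k²} / F_{k²} → 1`
almost surely. Between consecutive squares `S` and `F` are monotone and `F_{(k+1)²} / F_{k²} → 1`,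
which squeezes `S_N / F_N` to `1`; as `F_N → ∞`, also `S_N → ∞`.
-/

open MeasureTheory Filter Topology

open ProbabilityTheory
open scoped ENNReal Finset

section AntitoneSums

variable {μ : ℕ → ℝ}

lemma mul_le_sum_Icc_of_antitoneOn (hμ : AntitoneOn μ (Set.Ici 1)) (N : ℕ) :
    N * μ N ≤ ∑ n ∈ Finset.Icc 1 N, μ n := by
  calc (N : ℝ) * μ N = ∑ _n ∈ Finset.Icc 1 N, μ N := by simp
    _ ≤ ∑ n ∈ Finset.Icc 1 N, μ n := Finset.sum_le_sum fun n hn => by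
      obtain ⟨h1, hN⟩ := Finset.mem_Icc.mp hn
      exact hμ (Set.mem_Ici.mpr h1) (Set.mem_Ici.mpr (h1.trans hN)) hN

lemma sum_Icc_sub_sum_Icc_le_of_antitoneOn (hμ : AntitoneOn μ (Set.Ici 1)) {M N : ℕ}
    (hM : 1 ≤ M) (hMN : M ≤ N) :
    ∑ n ∈ Finset.Icc 1 N, μ n - ∑ n ∈ Finset.Icc 1 M, μ n ≤ (N - M : ℕ) * μ M := by
  have hsub : Finset.Icc 1 M ⊆ Finset.Icc 1 N := Finset.Icc_subset_Icc_right hMN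
  rw [← Finset.sum_sdiff hsub, add_sub_cancel_right]
  calc ∑ n ∈ Finset.Icc 1 N \ Finset.Icc 1 M, μ n
      ≤ ∑ _n ∈ Finset.Icc 1 N \ Finset.Icc 1 M, μ M := Finset.sum_le_sum fun n hn => by
        simp only [Finset.mem_sdiff, Finset.mem_Icc, not_and, not_le] at hn
        exact hμ (Set.mem_Ici.mpr hM) (Set.mem_Ici.mpr hn.1.1) (hn.2 hn.1.1).le
    _ = (N - M : ℕ) * μ M := by simp [Finset.card_sdiff_of_subset hsub]

lemma monotone_sum_Icc (hμ : ∀ n, 1 ≤ n → 0 ≤ μ n) :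
    Monotone fun N => ∑ n ∈ Finset.Icc 1 N, μ n := fun _ _ hMN =>
  Finset.sum_le_sum_of_subset_of_nonneg (Finset.Icc_subset_Icc_right hMN)
    fun n hn _ => hμ n (Finset.mem_Icc.mp hn).1

lemma sum_Icc_pos (hpos : ∀ n, 1 ≤ n → 0 < μ n) {N : ℕ} (hN : 1 ≤ N) :
    0 < ∑ n ∈ Finset.Icc 1 N, μ n :=
  Finset.sum_pos (fun n hn => hpos n (Finset.mem_Icc.mp hn).1) (Finset.nonempty_Icc.mpr hN)

lemma tendsto_sum_Icc_succ_sq_div_sum_Icc_sq (hμ : AntitoneOn μ (Set.Ici 1))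
    (hpos : ∀ n, 1 ≤ n → 0 < μ n) :
    Tendsto (fun k => (∑ n ∈ Finset.Icc 1 ((k + 1) ^ 2), μ n) / ∑ n ∈ Finset.Icc 1 (k ^ 2), μ n)
      atTop (𝓝 1) := by
  have hupper : Tendsto (fun k : ℕ => 1 + 3 / (k : ℝ)) atTop (𝓝 1) := by
    simpa using tendsto_const_nhds.add (tendsto_const_div_atTop_nhds_zero_nat (3 : ℝ))
  refine tendsto_of_tendsto_of_tendsto_of_le_of_le' tendsto_const_nhds hupper ?_ ?_
  all_goals
    filter_upwards [eventually_ge_atTop 1] with k hk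
    have hk2 : 1 ≤ k ^ 2 := Nat.one_le_pow _ _ hk
    have hsq : k ^ 2 ≤ (k + 1) ^ 2 := Nat.pow_le_pow_left k.le_succ 2
    have hF : (k : ℝ) ^ 2 * μ (k ^ 2) ≤ ∑ n ∈ Finset.Icc 1 (k ^ 2), μ n := by
      exact_mod_cast mul_le_sum_Icc_of_antitoneOn hμ (k ^ 2)
    have hFpos := sum_Icc_pos hpos hk2
  · rw [le_div_iff₀ hFpos, one_mul]
    exact monotone_sum_Icc (fun n hn => (hpos n hn).le) hsq
  -- passing from `k²` to `(k + 1)²` adds `2k + 1` terms `≤ μ (k²)` to a sum `≥ k² μ (k²)`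
  · have hdiff := sum_Icc_sub_sum_Icc_le_of_antitoneOn hμ hk2 hsq
    have hcard : ((k + 1) ^ 2 - k ^ 2 : ℕ) = 2 * k + 1 := Nat.sub_eq_of_eq_add (by ring)
    have hk1 : (1 : ℝ) ≤ k := by exact_mod_cast hk
    have hμk := hpos _ hk2
    have h3k : ((2 * k + 1 : ℕ) : ℝ) * μ (k ^ 2) ≤ 3 / k * (k ^ 2 * μ (k ^ 2)) := by
      rw [show 3 / (k : ℝ) * (k ^ 2 * μ (k ^ 2)) = 3 * k * μ (k ^ 2) by field_simp]
      push_cast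
      nlinarith
    rw [hcard] at hdiff
    rw [div_le_iff₀ hFpos, add_mul, one_mul]
    nlinarith [mul_le_mul_of_nonneg_left hF (by positivity : (0 : ℝ) ≤ 3 / k)]

end AntitoneSums

lemma Nat.tendsto_sqrt_atTop : Tendsto Nat.sqrt atTop atTop :=
  tendsto_atTop_atTop.mpr fun b => ⟨b ^ 2, fun n hn => by
    simpa only [Nat.sqrt_eq'] using Nat.sqrt_le_sqrt hn⟩

lemma tendsto_div_of_tendsto_div_sq {T F : ℕ → ℝ} (hT : Monotone T) (hF : Monotone F)
    (hT0 : ∀ N, 0 ≤ T N) (hFpos : ∀ N, 1 ≤ N → 0 < F N)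
    (hsq : Tendsto (fun k => T (k ^ 2) / F (k ^ 2)) atTop (𝓝 1))
    (hratio : Tendsto (fun k => F ((k + 1) ^ 2) / F (k ^ 2)) atTop (𝓝 1)) :
    Tendsto (fun N => T N / F N) atTop (𝓝 1) := by
  have hlower : Tendsto (fun k => T (k ^ 2) / F ((k + 1) ^ 2)) atTop (𝓝 1) := by
    have h := hsq.div hratio one_ne_zero
    rw [div_one] at h
    refine h.congr' ?_
    filter_upwards [eventually_ge_atTop 1] with k hk
    have := hFpos _ (Nat.one_le_pow 2 k hk)
    have := hFpos _ (Nat.one_le_pow 2 (k + 1) k.succ_pos)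
    rw [Pi.div_apply]
    field_simp
  have hupper : Tendsto (fun k => T ((k + 1) ^ 2) / F (k ^ 2)) atTop (𝓝 1) := by
    have h := (hsq.comp (tendsto_add_atTop_nat 1)).mul hratio
    rw [one_mul] at h
    refine h.congr' ?_
    filter_upwards [eventually_ge_atTop 1] with k hk
    have := hFpos _ (Nat.one_le_pow 2 k hk)
    have := hFpos _ (Nat.one_le_pow 2 (k + 1) k.succ_pos)
    simp only [Function.comp_apply]
    field_simp
  refine tendsto_of_tendsto_of_tendsto_of_le_of_le' (hlower.comp Nat.tendsto_sqrt_atTop)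
    (hupper.comp Nat.tendsto_sqrt_atTop) ?_ ?_
  all_goals
    filter_upwards [eventually_ge_atTop 1] with N hN
    have hlo : N.sqrt ^ 2 ≤ N := Nat.sqrt_le' N
    have hhi : N ≤ (N.sqrt + 1) ^ 2 := (Nat.lt_succ_sqrt' N).le
    have hFsq : 0 < F (N.sqrt ^ 2) := hFpos _ (Nat.one_le_pow _ _ (Nat.sqrt_pos.mpr hN))
    simp only [Function.comp_apply]
  · exact div_le_div₀ (hT0 N) (hT hlo) (hFpos N hN) (hF hhi)
  · exact div_le_div₀ (hT0 _) (hT hhi) hFsq (hF hlo)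

section PowerLaw

variable {μ : ℕ → ℝ} {a c : ℝ}

lemma antitoneOn_of_eq_mul_rpow_neg (hμ : ∀ n, 1 ≤ n → μ n = c * (n : ℝ) ^ (-a))
    (ha : 0 ≤ a) (hc : 0 ≤ c) : AntitoneOn μ (Set.Ici 1) := by
  intro m hm n hn hmn
  rw [hμ m hm, hμ n hn]
  have hm0 : (0 : ℝ) < m := by exact_mod_cast hm
  exact mul_le_mul_of_nonneg_left
    (Real.rpow_le_rpow_of_nonpos hm0 (by exact_mod_cast hmn) (neg_nonpos.mpr ha)) hc

lemma mul_rpow_le_sum_Icc (hμ : ∀ n, 1 ≤ n → μ n = c * (n : ℝ) ^ (-a))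
    (ha : 0 ≤ a) (hc : 0 ≤ c) {N : ℕ} (hN : 1 ≤ N) :
    c * (N : ℝ) ^ (1 - a) ≤ ∑ n ∈ Finset.Icc 1 N, μ n := by
  have hN0 : (0 : ℝ) < N := by exact_mod_cast hN
  calc c * (N : ℝ) ^ (1 - a) = N * μ N := by
        rw [hμ N hN, sub_eq_add_neg, Real.rpow_add hN0, Real.rpow_one]; ring
    _ ≤ ∑ n ∈ Finset.Icc 1 N, μ n :=
        mul_le_sum_Icc_of_antitoneOn (antitoneOn_of_eq_mul_rpow_neg hμ ha hc) N

lemma tendsto_sum_Icc_atTop_of_eq_mul_rpow_neg (hμ : ∀ n, 1 ≤ n → μ n = c * (n : ℝ) ^ (-a))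
    (ha : 0 ≤ a) (ha1 : a < 1) (hc : 0 < c) :
    Tendsto (fun N => ∑ n ∈ Finset.Icc 1 N, μ n) atTop atTop := by
  refine tendsto_atTop_mono' atTop ?_ <| (tendsto_rpow_atTop (by linarith : 0 < 1 - a)).comp
    tendsto_natCast_atTop_atTop |>.const_mul_atTop hc
  filter_upwards [eventually_ge_atTop 1] with N hN
  exact mul_rpow_le_sum_Icc hμ ha hc.le hN

lemma summable_inv_sum_Icc_sq_of_eq_mul_rpow_neg (hμ : ∀ n, 1 ≤ n → μ n = c * (n : ℝ) ^ (-a))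
    (ha : 0 ≤ a) (ha2 : a < 1 / 2) (hc : 0 < c) :
    Summable fun k => (∑ n ∈ Finset.Icc 1 (k ^ 2), μ n)⁻¹ := by
  refine ((Real.summable_nat_rpow.mpr (by linarith : 2 * a - 2 < -1)).mul_left c⁻¹).of_nonneg_of_le
    (fun k => inv_nonneg.mpr (Finset.sum_nonneg fun n hn => ?_)) fun k => ?_
  · rw [hμ n (Finset.mem_Icc.mp hn).1]
    positivity
  rcases Nat.eq_zero_or_pos k with rfl | hk
  · simp [Real.zero_rpow (by linarith : 2 * a - 2 ≠ 0)]
  have hk0 : (0 : ℝ) < k := by exact_mod_cast hk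
  have hlow := mul_rpow_le_sum_Icc hμ ha hc.le (Nat.one_le_pow 2 k hk)
  have hpow : ((k ^ 2 : ℕ) : ℝ) ^ (1 - a) = ((k : ℝ) ^ (2 * a - 2))⁻¹ := by
    rw [← Real.rpow_neg hk0.le, Nat.cast_pow, ← Real.rpow_natCast, ← Real.rpow_mul hk0.le]
    norm_num; ring_nf
  rw [hpow] at hlow
  calc (∑ n ∈ Finset.Icc 1 (k ^ 2), μ n)⁻¹ ≤ (c * ((k : ℝ) ^ (2 * a - 2))⁻¹)⁻¹ :=
        inv_anti₀ (by positivity) hlow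
    _ = c⁻¹ * (k : ℝ) ^ (2 * a - 2) := by rw [mul_inv, inv_inv]

end PowerLaw

lemma ENNReal.tendsto_nhds_zero_of_tendsto_sq {α : Type*} {l : Filter α} {z : α → ENNReal}
    (h : Tendsto (fun k => z k ^ 2) l (𝓝 0)) : Tendsto z l (𝓝 0) := by
  have := (ENNReal.continuous_rpow_const (y := 1/2)).tendsto 0 |>.comp h
  rw [ENNReal.zero_rpow_of_pos (by norm_num)] at this
  refine this.congr fun k => ?_
  rw [Function.comp_apply, ← ENNReal.rpow_natCast, ← ENNReal.rpow_mul]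
  norm_num

lemma ae_tendsto_sub_integral_of_summable_variance {Ω : Type*} [MeasurableSpace Ω]
    {P : Measure Ω} [IsFiniteMeasure P] {Y : ℕ → Ω → ℝ} (hY : ∀ k, MemLp (Y k) 2 P)
    (h : Summable fun k => Var[Y k; P]) :
    ∀ᵐ ω ∂P, Tendsto (fun k => Y k ω - P[Y k]) atTop (𝓝 0) := by
  have hmeas : ∀ k, AEMeasurable (fun ω => ‖Y k ω - P[Y k]‖ₑ ^ 2) P :=
    fun k => ((hY k).aemeasurable.sub_const _).enorm.pow_const 2
  have hint : ∫⁻ ω, ∑' k, ‖Y k ω - P[Y k]‖ₑ ^ 2 ∂P ≠ ∞ := by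
    rw [lintegral_tsum hmeas]
    change ∑' k, eVar[Y k; P] ≠ ∞
    simp_rw [← ofReal_variance (hY _)]
    rw [← ENNReal.ofReal_tsum_of_nonneg (fun k => variance_nonneg _ _) h]
    exact ENNReal.ofReal_ne_top
  filter_upwards [ae_lt_top' (AEMeasurable.tsum hmeas) hint] with ω hω
  exact tendsto_zero_iff_enorm_tendsto_zero.mpr <|
    ENNReal.tendsto_nhds_zero_of_tendsto_sq (ENNReal.tendsto_atTop_zero_of_tsum_ne_top hω.ne)

lemma sum_filter_lt_tsub_le_tsum {ρ : ℕ → ℝ} (hρ0 : ∀ k, 0 ≤ ρ k) (hρ : Summable ρ)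
    (s : Finset ℕ) (n : ℕ) : ∑ i ∈ s with i < n, ρ (n - i) ≤ ∑' k, ρ k := by
  have hinj : Set.InjOn (n - ·) (s.filter (· < n)) := by
    intro x hx y hy hxy
    simp only [Finset.coe_filter, Set.mem_ofPred_eq] at hx hy hxy
    omega
  rw [← Finset.sum_image hinj]
  exact hρ.sum_le_tsum _ fun k _ => hρ0 k

lemma variance_sum_le_of_covariance_le {Ω : Type*} [MeasurableSpace Ω] {P : Measure Ω}
    [IsFiniteMeasure P] {X : ℕ → Ω → ℝ} {s : Finset ℕ} (hX : ∀ i ∈ s, MemLp (X i) 2 P)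
    {μ ρ : ℕ → ℝ} (hρ0 : ∀ k, 0 ≤ ρ k) (hρ : Summable ρ)
    (hvar : ∀ i ∈ s, Var[X i; P] ≤ μ i)
    (hcov : ∀ i ∈ s, ∀ j ∈ s, i < j → cov[X i, X j; P] ≤ ρ (j - i) * μ j) :
    Var[∑ i ∈ s, X i; P] ≤ 2 * (1 + ∑' k, ρ k) * ∑ j ∈ s, μ j := by
  have hμ : ∀ j ∈ s, 0 ≤ μ j := fun j hj => (variance_nonneg _ _).trans (hvar j hj)
  -- `w i j` charges the covariance of a pair to its later index
  set w : ℕ → ℕ → ℝ := fun i j =>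
    (if i = j then μ j else 0) + (if i < j then ρ (j - i) * μ j else 0)
  have hw : ∀ i ∈ s, ∀ j ∈ s, cov[X i, X j; P] ≤ w i j + w j i := by
    intro i hi j hj
    rcases lt_trichotomy i j with hij | rfl | hij
    · simpa [w, hij, hij.ne, hij.ne', hij.not_gt] using hcov i hi j hj hij
    · rw [covariance_self (hX i hi).aemeasurable]
      simp only [w, ite_true, lt_irrefl, ite_false, add_zero]
      linarith [hvar i hi, hμ i hi]
    · rw [covariance_comm]
      simpa [w, hij, hij.ne, hij.ne', hij.not_gt] using hcov j hj i hi hij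
  have hcol : ∀ j ∈ s, ∑ i ∈ s, w i j ≤ (1 + ∑' k, ρ k) * μ j := by
    intro j hj
    simp only [w, Finset.sum_add_distrib, Finset.sum_ite_eq', if_pos hj, ← Finset.sum_filter,
      ← Finset.sum_mul]
    nlinarith [sum_filter_lt_tsub_le_tsum hρ0 hρ s j, hμ j hj]
  calc Var[∑ i ∈ s, X i; P] = ∑ i ∈ s, ∑ j ∈ s, cov[X i, X j; P] := variance_sum' hX
    _ ≤ ∑ i ∈ s, ∑ j ∈ s, (w i j + w j i) :=
      Finset.sum_le_sum fun i hi => Finset.sum_le_sum fun j hj => hw i hi j hj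
    _ = 2 * ∑ j ∈ s, ∑ i ∈ s, w i j := by
      simp only [Finset.sum_add_distrib]
      rw [Finset.sum_comm (f := fun i j => w i j)]
      ring
    _ ≤ 2 * ∑ j ∈ s, (1 + ∑' k, ρ k) * μ j := by gcongr with j hj; exact hcol j hj
    _ = 2 * (1 + ∑' k, ρ k) * ∑ j ∈ s, μ j := by rw [← Finset.mul_sum]; ring

section HitCount

variable {Ω : Type*} {E : ℕ → Set Ω}

noncomputable def hitCount (E : ℕ → Set Ω) (N : ℕ) (ω : Ω) : ℝ :=
  ∑ n ∈ Finset.Icc 1 N, (E n).indicator 1 ω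

lemma hitCount_eq_sum (N : ℕ) : hitCount E N = ∑ n ∈ Finset.Icc 1 N, (E n).indicator 1 := by
  ext ω; simp [hitCount]

lemma hitCount_nonneg (N : ℕ) (ω : Ω) : 0 ≤ hitCount E N ω :=
  Finset.sum_nonneg fun _ _ => Set.indicator_nonneg (fun _ _ => zero_le_one) ω

lemma monotone_hitCount (ω : Ω) : Monotone fun N => hitCount E N ω := fun _ _ hMN =>
  Finset.sum_le_sum_of_subset_of_nonneg (Finset.Icc_subset_Icc_right hMN)
    fun _ _ _ => Set.indicator_nonneg (fun _ _ => zero_le_one) ω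

lemma infinite_setOf_mem_of_tendsto_hitCount {ω : Ω}
    (h : Tendsto (fun N => hitCount E N ω) atTop atTop) :
    {n | 1 ≤ n ∧ ω ∈ E n}.Infinite := by
  classical
  intro hfin
  have hbound (N : ℕ) : hitCount E N ω ≤ #hfin.toFinset := by
    calc hitCount E N ω = #{n ∈ Finset.Icc 1 N | ω ∈ E n} := by
          simp [hitCount, Set.indicator_apply]
      _ ≤ #hfin.toFinset := by
          refine Nat.cast_le.mpr (Finset.card_le_card fun n hn => ?_)
          simp only [Finset.mem_filter, Finset.mem_Icc] at hn
          exact hfin.mem_toFinset.mpr ⟨hn.1.1, hn.2⟩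
  obtain ⟨N, hN⟩ := (h.eventually_gt_atTop (#hfin.toFinset : ℝ)).exists
  exact (hbound N).not_gt hN

variable [MeasurableSpace Ω] {P : Measure Ω} {ρ : ℕ → ℝ}

lemma HasPropP.abs_measureReal_inter_sub_le (hP : HasPropP P E ρ) {m n : ℕ} (hm : 1 ≤ m)
    (hmn : m < n) :
    |P.real (E m ∩ E n) - P.real (E m) * P.real (E n)| ≤ ρ (n - m) * P.real (E n) := by
  have h := hP 0 ![m, n] (by simpa [Fin.strictMono_iff_lt_succ] using hmn) hm
  have hpair : ⋂ i, E (![m, n] i) = E m ∩ E n := by ext; simp [Fin.forall_fin_two]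
  have htail : ⋂ i : Fin 1, E (![m, n] i.succ) = E n := by ext; simp
  rw [hpair, htail] at h
  simpa [measureReal_def] using h

lemma memLp_indicator_one [IsFiniteMeasure P] {A : Set Ω} (hA : MeasurableSet A) :
    MemLp (A.indicator (1 : Ω → ℝ)) 2 P :=
  (memLp_const (1 : ℝ)).indicator hA

lemma covariance_indicator_one [IsProbabilityMeasure P] {A B : Set Ω} (hA : MeasurableSet A)
    (hB : MeasurableSet B) :
    cov[A.indicator 1, B.indicator 1; P] = P.real (A ∩ B) - P.real A * P.real B := by
  rw [covariance_eq_sub (memLp_indicator_one hA) (memLp_indicator_one hB),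
    ← Set.inter_indicator_one, integral_indicator_one (hA.inter hB), integral_indicator_one hA,
    integral_indicator_one hB]

lemma variance_indicator_one_le [IsProbabilityMeasure P] {A : Set Ω} (hA : MeasurableSet A) :
    Var[A.indicator 1; P] ≤ P.real A := by
  refine (variance_le_expectation_sq (memLp_indicator_one hA).aestronglyMeasurable).trans_eq ?_
  have : (A.indicator (1 : Ω → ℝ)) ^ 2 = A.indicator 1 := by
    rw [sq, ← Set.inter_indicator_one, Set.inter_self]
  rw [this, integral_indicator_one hA]

lemma memLp_hitCount [IsFiniteMeasure P] (hE : ∀ n, MeasurableSet (E n)) (N : ℕ) :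
    MemLp (hitCount E N) 2 P := by
  rw [hitCount_eq_sum]
  exact memLp_finsetSum' _ fun n _ => memLp_indicator_one (hE n)

lemma integral_hitCount [IsProbabilityMeasure P] (hE : ∀ n, MeasurableSet (E n)) (N : ℕ) :
    P[hitCount E N] = ∑ n ∈ Finset.Icc 1 N, P.real (E n) := by
  simp only [hitCount]
  rw [integral_finsetSum _ fun n _ => (memLp_indicator_one (hE n)).integrable one_le_two]
  simp only [integral_indicator_one (hE _)]

lemma variance_hitCount_le [IsProbabilityMeasure P] (hE : ∀ n, MeasurableSet (E n))
    (hρ0 : ∀ k, 0 ≤ ρ k) (hρ : Summable ρ) (hP : HasPropP P E ρ) (N : ℕ) :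
    Var[hitCount E N; P] ≤ 2 * (1 + ∑' k, ρ k) * ∑ n ∈ Finset.Icc 1 N, P.real (E n) := by
  rw [hitCount_eq_sum]
  refine variance_sum_le_of_covariance_le (fun n _ => memLp_indicator_one (hE n)) hρ0 hρ
    (fun n _ => variance_indicator_one_le (hE n)) fun m hm n _ hmn => ?_
  rw [covariance_indicator_one (hE m) (hE n)]
  exact (abs_le.mp (hP.abs_measureReal_inter_sub_le (Finset.mem_Icc.mp hm).1 hmn)).2

lemma ae_tendsto_hitCount_div [IsProbabilityMeasure P] (hE : ∀ n, MeasurableSet (E n))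
    (hρ0 : ∀ k, 0 ≤ ρ k) (hρ : Summable ρ) (hP : HasPropP P E ρ) {u : ℕ → ℕ}
    (hu : Summable fun k => (∑ n ∈ Finset.Icc 1 (u k), P.real (E n))⁻¹)
    (hu0 : ∀ᶠ k in atTop, ∑ n ∈ Finset.Icc 1 (u k), P.real (E n) ≠ 0) :
    ∀ᵐ ω ∂P, Tendsto (fun k => hitCount E (u k) ω / ∑ n ∈ Finset.Icc 1 (u k), P.real (E n))
      atTop (𝓝 1) := by
  set F : ℕ → ℝ := fun N => ∑ n ∈ Finset.Icc 1 N, P.real (E n)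
  set K := 2 * (1 + ∑' k, ρ k)
  set Y : ℕ → Ω → ℝ := fun k ω => (F (u k))⁻¹ * hitCount E (u k) ω
  have hY : ∀ k, MemLp (Y k) 2 P := fun k => (memLp_hitCount hE (u k)).const_mul _
  have hvar : ∀ k, Var[Y k; P] ≤ K * (F (u k))⁻¹ := fun k => by
    rw [variance_const_mul]
    calc (F (u k))⁻¹ ^ 2 * Var[hitCount E (u k); P] ≤ (F (u k))⁻¹ ^ 2 * (K * F (u k)) :=
          mul_le_mul_of_nonneg_left (variance_hitCount_le hE hρ0 hρ hP _) (sq_nonneg _)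
      _ = K * (F (u k))⁻¹ := by
          rcases eq_or_ne (F (u k)) 0 with h | h
          · simp [h]
          · field_simp
  have hmean : ∀ᶠ k in atTop, P[Y k] = 1 := by
    filter_upwards [hu0] with k hk
    rw [integral_const_mul, integral_hitCount hE, inv_mul_cancel₀ hk]
  filter_upwards [ae_tendsto_sub_integral_of_summable_variance hY
    (hu.mul_left K |>.of_nonneg_of_le (fun k => variance_nonneg _ _) hvar)] with ω hω
  have hω1 := hω.add_const 1
  rw [zero_add] at hω1
  refine hω1.congr' ?_
  filter_upwards [hmean] with k hk
  rw [hk, sub_add_cancel, div_eq_inv_mul]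

end HitCount

theorem stmt7_general {Ω : Type*} [MeasurableSpace Ω] (P : Measure Ω) [IsProbabilityMeasure P]
    (E : ℕ → Set Ω) (hE : ∀ n, MeasurableSet (E n))
    (ρ : ℕ → ℝ) (hρ0 : ∀ n, 0 ≤ ρ n) (hρsum : Summable ρ)
    (hP : HasPropP P E ρ)
    (a c : ℝ) (ha : a ∈ Set.Ioo (0:ℝ) (1/2)) (hc : 0 < c)
    (hmeasE : ∀ n : ℕ, 1 ≤ n → (P (E n)).toReal = c * (n:ℝ) ^ (-a)) :
    ∀ᵐ ω ∂P, {n : ℕ | 1 ≤ n ∧ ω ∈ E n}.Infinite ∧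
      Tendsto (fun N : ℕ =>
          (∑ n ∈ Finset.Icc 1 N, (E n).indicator (fun _ => (1:ℝ)) ω) /
            ∑ n ∈ Finset.Icc 1 N, (P (E n)).toReal)
        atTop (𝓝 1) := by
  have hμ : ∀ n, 1 ≤ n → P.real (E n) = c * (n : ℝ) ^ (-a) := hmeasE
  have hpos : ∀ n, 1 ≤ n → 0 < P.real (E n) := fun n hn => by rw [hμ n hn]; positivity
  have hanti := antitoneOn_of_eq_mul_rpow_neg hμ ha.1.le hc.le
  have hsq := ae_tendsto_hitCount_div (u := (· ^ 2)) hE hρ0 hρsum hP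
    (summable_inv_sum_Icc_sq_of_eq_mul_rpow_neg hμ ha.1.le ha.2 hc)
    (eventually_ge_atTop 1 |>.mono fun k hk => (sum_Icc_pos hpos (Nat.one_le_pow 2 k hk)).ne')
  filter_upwards [hsq] with ω hω
  have hlim := tendsto_div_of_tendsto_div_sq (monotone_hitCount ω)
    (monotone_sum_Icc fun n hn => (hpos n hn).le) (hitCount_nonneg · ω)
    (fun N hN => sum_Icc_pos hpos hN) hω (tendsto_sum_Icc_succ_sq_div_sum_Icc_sq hanti hpos)
  refine ⟨infinite_setOf_mem_of_tendsto_hitCount ?_, hlim⟩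
  refine (hlim.pos_mul_atTop one_pos
    (tendsto_sum_Icc_atTop_of_eq_mul_rpow_neg hμ ha.1.le (by linarith [ha.2]) hc)).congr' ?_
  filter_upwards [eventually_ge_atTop 1] with N hN
  exact div_mul_cancel₀ _ (sum_Icc_pos hpos hN).ne'

theorem stmt7 {Ω : Type*} [MeasurableSpace Ω] (P : Measure Ω) [IsProbabilityMeasure P]
    (E : ℕ → Set Ω) (hE : ∀ n, MeasurableSet (E n))
    (ρ : ℕ → ℝ) (hρ0 : ∀ n, 0 ≤ ρ n) (hρdec : Antitone ρ) (hρsum : Summable ρ)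
    (hP : HasPropP P E ρ)
    (a c : ℝ) (ha : a ∈ Set.Ioo (0:ℝ) (1/2)) (hc : 0 < c)
    (hmeasE : ∀ n : ℕ, 1 ≤ n → (P (E n)).toReal = c * (n:ℝ) ^ (-a)) :
    ∀ᵐ ω ∂P, {n : ℕ | 1 ≤ n ∧ ω ∈ E n}.Infinite ∧
      Tendsto (fun N : ℕ =>
          (∑ n ∈ Finset.Icc 1 N, (E n).indicator (fun _ => (1:ℝ)) ω) /
            ∑ n ∈ Finset.Icc 1 N, (P (E n)).toReal)
        atTop (𝓝 1) :=
  stmt7_general P E hE ρ hρ0 hρsum hP a c ha hc hmeasE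
end

section
/- Let $\alpha\in(0,1)$ be a badly approximable irrational, $T_\alpha$ the rotation by $\alpha$ on $[0,1)$ with Lebesgue measure $\lambda$, and $E_n:=B(0,n^{-a}/2)\subseteq[0,1)$ (an arc of length $n^{-a}$ around $0$) for some fixed $a\in(0,1/2)$. For $y\in[0,1)$ such that the set $\Lambda_y=\{n: T_\alpha^n y\in E_n\}$ is infinite, let $(r_n(y))$ be its increasing enumeration. Then the sequence $(r_n(y))$ is NOT pointwise universally $L^2$-good and ergodic; specifically, taking $f=\mathbb{1}_{[0,1/4]}$ and $(X,\mu,T)=([0,1),\lambda,T_\alpha)$, for every $x\in[y+1/2,y+3/4] \pmod 1$ one has $f(T_\alpha^{r_n(y)}x)=0$ for all sufficiently large $n$, so the averages converge to $0\ne \int f\,d\lambda=1/4$. -/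
/-!
Write `T_α^m x = (x - y) + T_α^m y (mod 1)`. At a hitting time `m`, `T_α^m y` lies within
`m^{-a}/2 < 1/4` of `0` on the circle, so `T_α^m x` lies within `1/4` of `x - y ∈ [1/2, 3/4]`,
hence outside `[0, 1/4]`. Since the hitting times tend to infinity, `f(T_α^{r_n} x) = 0` for
all large `n`, and Cesàro averages of an eventually vanishing sequence tend to `0`.
-/

open Filter Topology

/-- `n` is a hitting time for the rotation by `α`: `T_α^n y` lies in the arc
`B(0, n^{-a}/2)` of the circle `[0,1)` around `0`. -/
def rotHit (α a y : ℝ) (n : ℕ) : Prop :=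
  1 ≤ n ∧ (Int.fract (y + n * α) < (n:ℝ) ^ (-a) / 2 ∨
    1 - (n:ℝ) ^ (-a) / 2 < Int.fract (y + n * α))

lemma quarter_lt_fract_add_of_fract_near_zero {u v ε : ℝ}
    (hu : Int.fract u ∈ Set.Icc (1/2 : ℝ) (3/4)) (hε : ε ≤ 1/4)
    (hv : Int.fract v < ε ∨ 1 - ε < Int.fract v) :
    1/4 < Int.fract (u + v) := by
  obtain ⟨hu₁, hu₂⟩ := hu
  rcases hv with hv | hv
  · -- here `fract u + fract v < 1`, so the integer carry `z` vanishes
    obtain ⟨z, hz⟩ := Int.fract_add u v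
    have hz₀ : z = 0 := by
      have h₁ : (-1 : ℝ) < z := by linarith [Int.fract_nonneg (u + v), Int.fract_lt_one v]
      have h₂ : (z : ℝ) < 1 := by linarith [Int.fract_lt_one (u + v), Int.fract_nonneg v]
      have : -1 < z ∧ z < 1 := ⟨by exact_mod_cast h₁, by exact_mod_cast h₂⟩
      omega
    rw [hz₀, Int.cast_zero] at hz
    linarith [Int.fract_nonneg v]
  · linarith [Int.fract_add_fract_le u v]

lemma indicator_fract_add_mul_eq_zero_of_rotHit {α a x y : ℝ} {m : ℕ} (hm : rotHit α a y m)
    (hsmall : (m : ℝ) ^ (-a) < 1/2) (hx : Int.fract (x - y) ∈ Set.Icc (1/2 : ℝ) (3/4)) :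
    (Set.Icc (0:ℝ) (1/4)).indicator (fun _ => (1:ℝ)) (Int.fract (x + m * α)) = 0 := by
  have hquarter := quarter_lt_fract_add_of_fract_near_zero hx (by linarith) hm.2
  rw [show x - y + (y + m * α) = x + m * α by ring] at hquarter
  exact Set.indicator_of_notMem (fun h => h.2.not_gt hquarter) _

theorem stmt16_general (α : ℝ)
    (a : ℝ) (ha : a ∈ Set.Ioo (0:ℝ) (1/2))
    (y : ℝ)
    (hinf : {n : ℕ | rotHit α a y n}.Infinite)
    (x : ℝ) (hx : Int.fract (x - y) ∈ Set.Icc (1/2 : ℝ) (3/4)) :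
    (∀ᶠ n in atTop, (Set.Icc (0:ℝ) (1/4)).indicator (fun _ => (1:ℝ))
        (Int.fract (x + (Nat.nth (rotHit α a y) n : ℝ) * α)) = 0) ∧
      Tendsto (fun N : ℕ => (N:ℝ)⁻¹ * ∑ n ∈ Finset.range N,
          (Set.Icc (0:ℝ) (1/4)).indicator (fun _ => (1:ℝ))
            (Int.fract (x + (Nat.nth (rotHit α a y) n : ℝ) * α)))
        atTop (𝓝 0) ∧
      (0:ℝ) ≠ 1/4 := by
  have harc : Tendsto (fun n => (Nat.nth (rotHit α a y) n : ℝ) ^ (-a)) atTop (𝓝 0) :=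
    (tendsto_rpow_neg_atTop ha.1).comp
      (tendsto_natCast_atTop_atTop.comp (Nat.nth_strictMono hinf).tendsto_atTop)
  have hzero : ∀ᶠ n in atTop, (Set.Icc (0:ℝ) (1/4)).indicator (fun _ => (1:ℝ))
      (Int.fract (x + (Nat.nth (rotHit α a y) n : ℝ) * α)) = 0 := by
    filter_upwards [harc.eventually (gt_mem_nhds one_half_pos)] with n hn
    exact indicator_fract_add_mul_eq_zero_of_rotHit (Nat.nth_mem_of_infinite hinf n) hn hx
  exact ⟨hzero, (tendsto_const_nhds.congr' (hzero.mono fun _ h => h.symm)).cesaro,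
    by norm_num⟩

/-- For a badly approximable rotation and shrinking arcs `E_n = B(0, n^{-a}/2)`, the
return-time sequence is not universally good and ergodic: for `f = 𝟙_{[0,1/4]}` and any
`x ∈ [y + 1/2, y + 3/4] (mod 1)`, the values `f(T_α^{r_n(y)} x)` vanish for all large `n`,
so the ergodic averages converge to `0` rather than `∫ f dλ = 1/4`. -/
theorem stmt16 (α : ℝ) (hα : α ∈ Set.Ioo (0:ℝ) 1)
    (hbad : ∃ c > 0, ∀ p q : ℕ, 1 ≤ q → c / (q:ℝ) ^ 2 < |α - (p:ℝ) / (q:ℝ)|)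
    (a : ℝ) (ha : a ∈ Set.Ioo (0:ℝ) (1/2))
    (y : ℝ) (hy : y ∈ Set.Ico (0:ℝ) 1)
    (hinf : {n : ℕ | rotHit α a y n}.Infinite)
    (x : ℝ) (hx : Int.fract (x - y) ∈ Set.Icc (1/2 : ℝ) (3/4)) :
    (∀ᶠ n in atTop, (Set.Icc (0:ℝ) (1/4)).indicator (fun _ => (1:ℝ))
        (Int.fract (x + (Nat.nth (rotHit α a y) n : ℝ) * α)) = 0) ∧
      Tendsto (fun N : ℕ => (N:ℝ)⁻¹ * ∑ n ∈ Finset.range N,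
          (Set.Icc (0:ℝ) (1/4)).indicator (fun _ => (1:ℝ))
            (Int.fract (x + (Nat.nth (rotHit α a y) n : ℝ) * α)))
        atTop (𝓝 0) ∧
      (0:ℝ) ≠ 1/4 :=
  stmt16_general α a ha y hinf x hx
end

section
/- Let $(\Omega,\mathcal{F},\mathbb{P})$ be a probability space and $(E_n)$ measurable sets satisfying property (P) with decreasing rate $\rho$ tending to $0$, with $\sigma_n:=\mathbb{P}(E_n)$ decreasing to $0$. Set $X_n=\mathbb{1}_{E_n}$, $Y_n=X_n-\sigma_n$. Then there is $C>0$ such that for all $n<m$: $\mathbb{E}(Y_n^2 Y_m^2)\le C\big((\rho(m-n)+\sigma_n)\sigma_m+\sigma_n^2\big)$. -/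
/-!
Since `𝟙_{E_n}` is an indicator, `Y_n² = (1 - 2σ_n) 𝟙_{E_n} + σ_n² ≤ 𝟙_{E_n} + σ_n²`, so
`𝔼(Y_n² Y_m²) ≤ ℙ(E_n ∩ E_m) + σ_n σ_m² + σ_n² σ_m + σ_n² σ_m²`.
For `n ≥ 1`, property (P) applied to the pair `n < m` bounds `ℙ(E_n ∩ E_m)` by
`(ρ(m - n) + σ_n) σ_m`, and the remaining terms are at most `σ_n σ_m + 2 σ_n²`.
Property (P) only speaks about indices `≥ 1`, so for `n = 0` we use instead that each of the four
terms is at most `min σ_0 σ_m ≤ σ_0⁻¹ σ_0 σ_m` (also when `σ_0 = 0`, as `0⁻¹ = 0`); this is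
where the constant `C = 2 + 4 σ_0⁻¹` comes from.
-/

open MeasureTheory Filter Topology

/-- The centered indicator random variable `Y_n = 𝟙_{E_n} - P(E_n)`. -/
noncomputable def centeredInd {Ω : Type*} [MeasurableSpace Ω] (P : Measure Ω)
    (E : ℕ → Set Ω) (n : ℕ) (ω : Ω) : ℝ :=
  (E n).indicator (fun _ => (1:ℝ)) ω - (P (E n)).toReal

lemma min_le_inv_mul_mul {a : ℝ} (ha : 0 ≤ a) (b : ℝ) : min a b ≤ a⁻¹ * (a * b) := by
  rcases ha.eq_or_lt with rfl | ha
  · simp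
  · rw [inv_mul_cancel_left₀ ha.ne']
    exact min_le_right a b

namespace HasPropP

variable {Ω : Type*} [MeasurableSpace Ω] {P : Measure Ω} {E : ℕ → Set Ω} {ρ : ℕ → ℝ}

theorem abs_inter_sub_mul_le (hP : HasPropP P E ρ) {n m : ℕ} (hn : 1 ≤ n) (hnm : n < m) :
    |(P (E n ∩ E m)).toReal - (P (E n)).toReal * (P (E m)).toReal| ≤
      ρ (m - n) * (P (E m)).toReal := by
  have hmono : StrictMono ![n, m] := by
    refine Fin.strictMono_iff_lt_succ.mpr fun i => ?_
    fin_cases i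
    exact hnm
  have h := hP 0 ![n, m] hmono hn
  have hpair : (⋂ i, E (![n, m] i)) = E n ∩ E m := by
    ext; simp [Fin.forall_fin_two]
  have htail : (⋂ i : Fin 1, E (![n, m] i.succ)) = E m := by
    ext; simp
  rw [hpair, htail] at h
  simpa using h

end HasPropP

section CenteredIndicator

variable {Ω : Type*} [MeasurableSpace Ω] (P : Measure Ω) (E : ℕ → Set Ω)

lemma centeredInd_sq_le (k : ℕ) (ω : Ω) :
    centeredInd P E k ω ^ 2 ≤ (E k).indicator 1 ω + (P (E k)).toReal ^ 2 := by
  have hσ : 0 ≤ (P (E k)).toReal := ENNReal.toReal_nonneg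
  by_cases h : ω ∈ E k <;> simp [centeredInd, h]; nlinarith

lemma integrable_indicator_add_mul_indicator_add [IsFiniteMeasure P] {A B : Set Ω}
    (hA : MeasurableSet A) (hB : MeasurableSet B) (a b : ℝ) :
    Integrable (fun ω => (A.indicator 1 ω + a) * (B.indicator 1 ω + b)) P := by
  refine (((integrable_const 1).indicator hB).add (integrable_const b)).bdd_mul (c := 1 + |a|)
    ((measurable_const.indicator hA).add_const a).aestronglyMeasurable (ae_of_all _ fun ω => ?_)
  by_cases h : ω ∈ A <;> simp [h]
  exact (abs_add_le 1 a).trans (by simp)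

variable [IsProbabilityMeasure P]

lemma integral_indicator_add_mul_indicator_add {A B : Set Ω} (hA : MeasurableSet A)
    (hB : MeasurableSet B) (a b : ℝ) :
    ∫ ω, (A.indicator 1 ω + a) * (B.indicator 1 ω + b) ∂P =
      P.real (A ∩ B) + b * P.real A + a * P.real B + a * b := by
  have hexpand : (fun ω => (A.indicator 1 ω + a) * (B.indicator 1 ω + b)) =
      fun ω => (A ∩ B).indicator 1 ω + b * A.indicator 1 ω + a * B.indicator 1 ω + a * b := by
    funext ω
    by_cases hωA : ω ∈ A <;> by_cases hωB : ω ∈ B <;> simp [hωA, hωB] <;> ring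
  have hAB : Integrable ((A ∩ B).indicator (1 : Ω → ℝ)) P :=
    (integrable_const 1).indicator (hA.inter hB)
  have hA' : Integrable (fun ω => b * A.indicator (1 : Ω → ℝ) ω) P :=
    ((integrable_const 1).indicator hA).const_mul b
  have hB' : Integrable (fun ω => a * B.indicator (1 : Ω → ℝ) ω) P :=
    ((integrable_const 1).indicator hB).const_mul a
  have hAB_A : Integrable (fun ω => (A ∩ B).indicator 1 ω + b * A.indicator 1 ω) P :=
    hAB.add hA'
  have hAB_A_B : Integrable
      (fun ω => (A ∩ B).indicator 1 ω + b * A.indicator 1 ω + a * B.indicator 1 ω) P :=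
    hAB_A.add hB'
  rw [hexpand, integral_add hAB_A_B (integrable_const _), integral_add hAB_A hB',
    integral_add hAB hA', integral_const_mul, integral_const_mul, integral_indicator_one (hA.inter hB), integral_indicator_one hA, integral_indicator_one hB]
  simp

variable {E}

lemma integral_centeredInd_sq_mul_sq_le (hE : ∀ n, MeasurableSet (E n)) (n m : ℕ) :
    ∫ ω, centeredInd P E n ω ^ 2 * centeredInd P E m ω ^ 2 ∂P ≤
      (P (E n ∩ E m)).toReal + (P (E m)).toReal ^ 2 * (P (E n)).toReal +
        (P (E n)).toReal ^ 2 * (P (E m)).toReal +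
        (P (E n)).toReal ^ 2 * (P (E m)).toReal ^ 2 := by
  have hnonneg : ∀ k ω, 0 ≤ (E k).indicator 1 ω + (P (E k)).toReal ^ 2 := fun k ω =>
    add_nonneg (Set.indicator_nonneg (fun _ _ => zero_le_one) ω) (sq_nonneg _)
  calc ∫ ω, centeredInd P E n ω ^ 2 * centeredInd P E m ω ^ 2 ∂P
      ≤ ∫ ω, ((E n).indicator 1 ω + (P (E n)).toReal ^ 2) *
          ((E m).indicator 1 ω + (P (E m)).toReal ^ 2) ∂P :=
        integral_mono_of_nonneg (ae_of_all _ fun ω => by positivity)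
          (integrable_indicator_add_mul_indicator_add P (hE n) (hE m) _ _)
          (ae_of_all _ fun ω => mul_le_mul (centeredInd_sq_le P E n ω)
            (centeredInd_sq_le P E m ω) (sq_nonneg _) (hnonneg n ω))
    _ = _ := integral_indicator_add_mul_indicator_add P (hE n) (hE m) _ _

lemma integral_centeredInd_sq_mul_sq_le_four_mul_min (hE : ∀ n, MeasurableSet (E n)) (n m : ℕ) :
    ∫ ω, centeredInd P E n ω ^ 2 * centeredInd P E m ω ^ 2 ∂P ≤
      4 * min (P (E n)).toReal (P (E m)).toReal := by
  have hint := integral_centeredInd_sq_mul_sq_le P hE n m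
  have hinter_n : (P (E n ∩ E m)).toReal ≤ (P (E n)).toReal :=
    ENNReal.toReal_mono (measure_ne_top P _) (measure_mono Set.inter_subset_left)
  have hinter_m : (P (E n ∩ E m)).toReal ≤ (P (E m)).toReal :=
    ENNReal.toReal_mono (measure_ne_top P _) (measure_mono Set.inter_subset_right)
  have hn0 : 0 ≤ (P (E n)).toReal := ENNReal.toReal_nonneg
  have hm0 : 0 ≤ (P (E m)).toReal := ENNReal.toReal_nonneg
  have hn1 : (P (E n)).toReal ≤ 1 := measureReal_le_one
  have hm1 : (P (E m)).toReal ≤ 1 := measureReal_le_one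
  rw [mul_min_of_nonneg _ _ (by norm_num)]
  refine le_min ?_ ?_
  · nlinarith [mul_nonneg hn0 hm0, mul_le_one₀ hn1 hm0 hm1]
  · nlinarith [mul_nonneg hn0 hm0, mul_le_one₀ hn1 hm0 hm1]

variable {ρ : ℕ → ℝ}

lemma integral_centeredInd_sq_mul_sq_le_two_mul (hE : ∀ n, MeasurableSet (E n))
    (hP : HasPropP P E ρ) {n m : ℕ} (hn : 1 ≤ n) (hnm : n < m) :
    ∫ ω, centeredInd P E n ω ^ 2 * centeredInd P E m ω ^ 2 ∂P ≤
      2 * ((ρ (m - n) + (P (E n)).toReal) * (P (E m)).toReal + (P (E n)).toReal ^ 2) := by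
  have hint := integral_centeredInd_sq_mul_sq_le P hE n m
  have hpair := hP.abs_inter_sub_mul_le hn hnm
  have hρσ : 0 ≤ ρ (m - n) * (P (E m)).toReal := (abs_nonneg _).trans hpair
  have hinter := (abs_le.mp hpair).2
  have hn0 : 0 ≤ (P (E n)).toReal := ENNReal.toReal_nonneg
  have hm0 : 0 ≤ (P (E m)).toReal := ENNReal.toReal_nonneg
  have hn1 : (P (E n)).toReal ≤ 1 := measureReal_le_one
  have hm1 : (P (E m)).toReal ≤ 1 := measureReal_le_one
  nlinarith [mul_nonneg hn0 hm0, mul_nonneg (mul_nonneg hn0 hm0) (sub_nonneg.2 hm1),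
    mul_nonneg (sq_nonneg (P (E n)).toReal) (sub_nonneg.2 hm1),
    mul_nonneg (mul_nonneg (sq_nonneg (P (E n)).toReal) hm0) (sub_nonneg.2 hm1)]

end CenteredIndicator

theorem stmt17_general {Ω : Type*} [MeasurableSpace Ω] (P : Measure Ω) [IsProbabilityMeasure P]
    (E : ℕ → Set Ω) (hE : ∀ n, MeasurableSet (E n))
    (ρ : ℕ → ℝ) (hρ0 : ∀ n, 0 ≤ ρ n)
    (hP : HasPropP P E ρ) :
    ∃ C > 0, ∀ n m : ℕ, n < m →
      (∫ ω, (centeredInd P E n ω) ^ 2 * (centeredInd P E m ω) ^ 2 ∂P) ≤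
        C * ((ρ (m - n) + (P (E n)).toReal) * (P (E m)).toReal +
          (P (E n)).toReal ^ 2) := by
  set σ₀ := (P (E 0)).toReal
  have hσ₀ : 0 ≤ σ₀ := ENNReal.toReal_nonneg
  refine ⟨2 + 4 * σ₀⁻¹, by positivity, fun n m hnm => ?_⟩
  have hσm : 0 ≤ (P (E m)).toReal := ENNReal.toReal_nonneg
  have hR : 0 ≤ (ρ (m - n) + (P (E n)).toReal) * (P (E m)).toReal + (P (E n)).toReal ^ 2 := by
    have := hρ0 (m - n); positivity
  rcases Nat.eq_zero_or_pos n with rfl | hn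
  · calc _ ≤ 4 * min σ₀ (P (E m)).toReal :=
          integral_centeredInd_sq_mul_sq_le_four_mul_min P hE 0 m
      _ ≤ 4 * σ₀⁻¹ * (σ₀ * (P (E m)).toReal) := by
          rw [mul_assoc]; gcongr; exact min_le_inv_mul_mul hσ₀ _
      _ ≤ 4 * σ₀⁻¹ * ((ρ (m - 0) + σ₀) * (P (E m)).toReal + σ₀ ^ 2) := by
          gcongr; nlinarith [mul_nonneg (hρ0 (m - 0)) hσm, sq_nonneg σ₀]
      _ ≤ _ := by gcongr; exact le_add_of_nonneg_left zero_le_two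
  · calc _ ≤ 2 * ((ρ (m - n) + (P (E n)).toReal) * (P (E m)).toReal + (P (E n)).toReal ^ 2) :=
          integral_centeredInd_sq_mul_sq_le_two_mul P hE hP hn hnm
      _ ≤ _ := by gcongr; exact le_add_of_nonneg_right (by positivity)

theorem stmt17 {Ω : Type*} [MeasurableSpace Ω] (P : Measure Ω) [IsProbabilityMeasure P]
    (E : ℕ → Set Ω) (hE : ∀ n, MeasurableSet (E n))
    (ρ : ℕ → ℝ) (hρ0 : ∀ n, 0 ≤ ρ n) (hρdec : Antitone ρ)
    (hρlim : Tendsto ρ atTop (𝓝 0))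
    (hσdec : Antitone fun n => (P (E n)).toReal)
    (hσlim : Tendsto (fun n => (P (E n)).toReal) atTop (𝓝 0))
    (hP : HasPropP P E ρ) :
    ∃ C > 0, ∀ n m : ℕ, n < m →
      (∫ ω, (centeredInd P E n ω) ^ 2 * (centeredInd P E m ω) ^ 2 ∂P) ≤
        C * ((ρ (m - n) + (P (E n)).toReal) * (P (E m)).toReal +
          (P (E n)).toReal ^ 2) :=
  stmt17_general P E hE ρ hρ0 hP
end
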